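/- arXiv:2005.07149 — 7 statements merged into one kernel-verified Lean document; each statement's English description precedes it below -/
import Mathlib

section
/- Let H be a real Hilbert space, T : H → H a nonexpansive mapping with Fix T ≠ ∅, and (β_n), (λ_n) ⊂ (0,1] real sequences satisfying: (i) lim β_n = 1, (ii) Σ_{n≥0} (1−β_n) = ∞, (iii) Σ_{n≥1} |β_n − β_{n−1}| < ∞, (iv) liminf λ_n > 0, (v) Σ_{n≥1} |λ_n − λ_{n−1}| < ∞. Then for any starting point x₀ ∈ H, the sequence (x_n) generated by the (T-KM) iteration converges strongly to the metric projection of 0 onto Fix T. -/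
/-!
For `0 < t < 1` the point `z_t = t T z_t` of Browder's curve satisfies
`(1 - t) ⟪z_t, z_t - x⟫ ≤ t ⟪T x - x, z_t - x⟫` for every `x`, by monotonicity of `I - T`.
Taking `x` a fixed point, or another point of the curve, shows that `‖z_t‖` increases with `t`
and is bounded by the norm of every fixed point, so `z_t` converges as `t ↑ 1` to the fixed
point `q` of minimal norm.

For the iteration, `‖x_{n+1} - x_n‖` satisfies a Xu-type recursion with summable errors
(conditions (iii), (v)), hence tends to `0`, and then so does `‖T x_n - x_n‖` (by (i), (iv)).
Testing Browder's inequality against `x_n` gives `limsup ⟪q, q - x_n⟫ ≤ 0`, and expanding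
`‖β_n x_n - q‖²` turns this into a second Xu recursion, for `‖x_n - q‖²`, which tends to `0`
by (ii). No weak cluster points or demiclosedness principle are needed.
-/

open Filter Finset Topology

local notation "⟪" x ", " y "⟫" => @inner ℝ _ _ x y

theorem tendsto_prod_one_sub_of_tendsto_sum {α : ℕ → ℝ} (hα : ∀ n, α n ∈ Set.Icc (0 : ℝ) 1)
    (hsum : Tendsto (fun n => ∑ i ∈ range n, α i) atTop atTop) (m : ℕ) :
    Tendsto (fun n => ∏ i ∈ Ico m n, (1 - α i)) atTop (𝓝 0) := by
  have hle : ∀ n, ∏ i ∈ Ico m n, (1 - α i) ≤ Real.exp (-∑ i ∈ Ico m n, α i) := fun n => by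
    rw [← sum_neg_distrib, Real.exp_sum]
    exact prod_le_prod (fun i _ => sub_nonneg.2 (hα i).2) fun i _ => by
      linarith [Real.add_one_le_exp (-α i)]
  have htail : Tendsto (fun n => ∑ i ∈ Ico m n, α i) atTop atTop := by
    refine (tendsto_atTop_add_const_right _ (-∑ i ∈ range m, α i) hsum).congr' ?_
    filter_upwards [eventually_ge_atTop m] with n hn
    rw [sum_Ico_eq_sub _ hn, sub_eq_add_neg]
  exact squeeze_zero (fun n => prod_nonneg fun i _ => sub_nonneg.2 (hα i).2) hle
    (Real.tendsto_exp_atBot.comp (tendsto_neg_atTop_atBot.comp htail))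

theorem le_prod_one_sub_mul_add_sum {a α δ c : ℕ → ℝ} {ε : ℝ} {m : ℕ}
    (hα : ∀ n, α n ∈ Set.Icc (0 : ℝ) 1) (hc : ∀ n, 0 ≤ c n) (hε : 0 ≤ ε)
    (hδ : ∀ n, m ≤ n → δ n ≤ ε) (h : ∀ n, a (n + 1) ≤ (1 - α n) * a n + α n * δ n + c n) :
    ∀ n, m ≤ n → a n ≤ (∏ i ∈ Ico m n, (1 - α i)) * a m + ε + ∑ i ∈ Ico m n, c i := by
  intro n hmn
  induction n, hmn using Nat.le_induction with
  | base => simp [hε]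
  | succ n hmn ih =>
    rw [prod_Ico_succ_top hmn, sum_Ico_succ_top hmn]
    have hS : 0 ≤ ∑ i ∈ Ico m n, c i := sum_nonneg fun i _ => hc i
    obtain ⟨hα0, hα1⟩ := hα n
    calc a (n + 1) ≤ (1 - α n) * a n + α n * δ n + c n := h n
      _ ≤ (1 - α n) * ((∏ i ∈ Ico m n, (1 - α i)) * a m + ε + ∑ i ∈ Ico m n, c i)
          + α n * ε + c n := by
        gcongr
        exact hδ n hmn
      _ ≤ _ := by nlinarith

/-- Xu's lemma. -/
theorem tendsto_zero_of_le_one_sub_mul_add {a α δ c : ℕ → ℝ} (ha : ∀ n, 0 ≤ a n)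
    (hα : ∀ n, α n ∈ Set.Icc (0 : ℝ) 1)
    (hαsum : Tendsto (fun n => ∑ i ∈ range n, α i) atTop atTop)
    (hδ : ∀ ε > 0, ∀ᶠ n in atTop, δ n ≤ ε) (hc : ∀ n, 0 ≤ c n) (hcsum : Summable c)
    (h : ∀ n, a (n + 1) ≤ (1 - α n) * a n + α n * δ n + c n) :
    Tendsto a atTop (𝓝 0) := by
  refine tendsto_order.2 ⟨fun b hb => .of_forall fun n => hb.trans_le (ha n), fun ε hε => ?_⟩
  have hε3 : 0 < ε / 3 := by positivity
  have htail : ∀ᶠ m in atTop, ∑' i, c (i + m) < ε / 3 :=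
    (tendsto_sum_nat_add c).eventually (gt_mem_nhds hε3)
  obtain ⟨m, hδm, hcm⟩ := ((eventually_forall_ge_atTop.2 (hδ (ε / 3) hε3)).and htail).exists
  have hprod := (tendsto_prod_one_sub_of_tendsto_sum hα hαsum m).mul_const (a m)
  rw [zero_mul] at hprod
  filter_upwards [eventually_ge_atTop m, hprod.eventually (gt_mem_nhds hε3)] with n hmn hPn
  have hS : ∑ i ∈ Ico m n, c i ≤ ∑' i, c (i + m) := by
    rw [sum_Ico_eq_sum_range]
    simp_rw [add_comm m]
    exact ((summable_nat_add_iff m).2 hcsum).sum_le_tsum _ fun i _ => hc _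
  linarith [le_prod_one_sub_mul_add_sum hα hc hε3.le hδm h n hmn]

theorem norm_apply_sub_le_of_isFixedPt {E : Type*} [SeminormedAddCommGroup E] {T : E → E}
    (hT : ∀ a b, ‖T a - T b‖ ≤ ‖a - b‖) {p : E} (hp : T p = p) (u : E) :
    ‖T u - u‖ ≤ 2 * ‖u - p‖ := by
  calc ‖T u - u‖ ≤ ‖T u - T p‖ + ‖p - u‖ := by
        simpa [hp] using norm_sub_le_norm_sub_add_norm_sub (T u) (T p) u
    _ ≤ 2 * ‖u - p‖ := by linarith [hT u p, norm_sub_rev p u]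

theorem cauchySeq_of_norm_sub_sq_le {E : Type*} [SeminormedAddCommGroup E] {z : ℕ → E}
    {g : ℕ → ℝ} (hg : BddAbove (Set.range g)) (h : ∀ k l, k ≤ l → ‖z l - z k‖ ^ 2 ≤ g l - g k) :
    CauchySeq z := by
  have hmono : Monotone g := fun k l hkl => by linarith [h k l hkl, sq_nonneg ‖z l - z k‖]
  have hlim := tendsto_atTop_ciSup hmono hg
  rw [Metric.cauchySeq_iff']
  intro ε hε
  obtain ⟨N, hN⟩ := (hlim.eventually (lt_mem_nhds (sub_lt_self _ (pow_pos hε 2)))).exists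
  refine ⟨N, fun n hn => lt_of_pow_lt_pow_left₀ 2 hε.le ?_⟩
  rw [dist_eq_norm]
  linarith [h N n hn, hmono.ge_of_tendsto hlim n]

section KrasnoselskiiMann

variable {H : Type*} [NormedAddCommGroup H] [NormedSpace ℝ H] {T : H → H}

def kmStep (T : H → H) (l : ℝ) (u : H) : H := u + l • (T u - u)

theorem kmStep_of_isFixedPt {p : H} (hp : T p = p) (l : ℝ) : kmStep T l p = p := by
  simp [kmStep, hp]

theorem norm_kmStep_sub_kmStep_le (hT : ∀ a b, ‖T a - T b‖ ≤ ‖a - b‖) {l : ℝ}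
    (hl : l ∈ Set.Icc (0 : ℝ) 1) (l' : ℝ) (u v : H) :
    ‖kmStep T l u - kmStep T l' v‖ ≤ ‖u - v‖ + |l - l'| * ‖T v - v‖ := by
  obtain ⟨hl0, hl1⟩ := hl
  have hsplit : kmStep T l u - kmStep T l' v
      = (1 - l) • (u - v) + l • (T u - T v) + (l - l') • (T v - v) := by
    simp only [kmStep]; module
  rw [hsplit]
  refine (norm_add_le _ _).trans (add_le_add ((norm_add_le _ _).trans ?_) ?_)
  · rw [norm_smul, norm_smul, Real.norm_of_nonneg (by linarith), Real.norm_of_nonneg hl0]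
    nlinarith [hT u v]
  · rw [norm_smul, Real.norm_eq_abs]

theorem norm_kmStep_sub_le_of_isFixedPt (hT : ∀ a b, ‖T a - T b‖ ≤ ‖a - b‖) {l : ℝ}
    (hl : l ∈ Set.Icc (0 : ℝ) 1) {p : H} (hp : T p = p) (u : H) :
    ‖kmStep T l u - p‖ ≤ ‖u - p‖ := by
  simpa [kmStep_of_isFixedPt hp, hp] using norm_kmStep_sub_kmStep_le hT hl l u p

end KrasnoselskiiMann

section Browder

variable {H : Type*} [NormedAddCommGroup H] [InnerProductSpace ℝ H] {T : H → H}

theorem inner_sub_apply_sub_nonneg (hT : ∀ a b, ‖T a - T b‖ ≤ ‖a - b‖) (a b : H) :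
    0 ≤ ⟪a - T a - (b - T b), a - b⟫ := by
  have hsplit : a - T a - (b - T b) = (a - b) - (T a - T b) := by abel
  rw [hsplit, inner_sub_left, real_inner_self_eq_norm_sq, sq]
  linarith [real_inner_le_norm (T a - T b) (a - b),
    mul_le_mul_of_nonneg_right (hT a b) (norm_nonneg (a - b))]

theorem exists_eq_smul_apply [CompleteSpace H] (hT : ∀ a b, ‖T a - T b‖ ≤ ‖a - b‖) {t : ℝ}
    (ht : t ∈ Set.Ico (0 : ℝ) 1) : ∃ z : H, z = t • T z := by
  obtain ⟨ht0, ht1⟩ := ht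
  have hcontr : ContractingWith (Real.toNNReal t) (fun v : H => t • T v) := by
    refine ⟨by simpa using ht1, LipschitzWith.of_dist_le' fun a b => ?_⟩
    rw [dist_eq_norm, dist_eq_norm, ← smul_sub, norm_smul, Real.norm_of_nonneg ht0]
    exact mul_le_mul_of_nonneg_left (hT a b) ht0
  have : Nonempty H := ⟨0⟩
  exact ⟨_, hcontr.fixedPoint_isFixedPt.symm⟩

theorem apply_eq_inv_smul_of_eq_smul_apply {t : ℝ} (ht : t ≠ 0) {z : H} (hz : z = t • T z) :
    T z = t⁻¹ • z := by
  rw [eq_inv_smul_iff₀ ht, ← hz]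

theorem one_sub_mul_inner_le (hT : ∀ a b, ‖T a - T b‖ ≤ ‖a - b‖) {t : ℝ} (ht : 0 < t) {z : H}
    (hz : z = t • T z) (x : H) : (1 - t) * ⟪z, z - x⟫ ≤ t * ⟪T x - x, z - x⟫ := by
  have hTz : z - T z = (1 - t⁻¹) • z := by
    rw [apply_eq_inv_smul_of_eq_smul_apply ht.ne' hz, sub_smul, one_smul]
  have hmono := inner_sub_apply_sub_nonneg hT z x
  rw [hTz, inner_sub_left, real_inner_smul_left, ← neg_sub (T x) x, inner_neg_left] at hmono
  have hscale : t * (1 - t⁻¹) = t - 1 := by field_simp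
  have := mul_nonneg ht.le hmono
  rw [mul_sub, ← mul_assoc, hscale] at this
  linarith

theorem inner_sub_nonpos_of_eq_smul_apply (hT : ∀ a b, ‖T a - T b‖ ≤ ‖a - b‖) {t : ℝ}
    (ht : t ∈ Set.Ioo (0 : ℝ) 1) {z p : H} (hz : z = t • T z) (hp : T p = p) :
    ⟪z, z - p⟫ ≤ 0 := by
  have := one_sub_mul_inner_le hT ht.1 hz p
  rw [hp, sub_self, inner_zero_left, mul_zero] at this
  exact nonpos_of_mul_nonpos_right this (by linarith [ht.2])

theorem norm_le_of_eq_smul_apply (hT : ∀ a b, ‖T a - T b‖ ≤ ‖a - b‖) {t : ℝ}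
    (ht : t ∈ Set.Ioo (0 : ℝ) 1) {z p : H} (hz : z = t • T z) (hp : T p = p) : ‖z‖ ≤ ‖p‖ := by
  have hinner := inner_sub_nonpos_of_eq_smul_apply hT ht hz hp
  rw [inner_sub_right, real_inner_self_eq_norm_mul_norm] at hinner
  have h : ‖z‖ * ‖z‖ ≤ ‖z‖ * ‖p‖ := by linarith [real_inner_le_norm z p]
  rcases (norm_nonneg z).eq_or_lt with h0 | h0
  · exact h0 ▸ norm_nonneg p
  · exact le_of_mul_le_mul_left h h0

theorem norm_sub_sq_le_of_eq_smul_apply (hT : ∀ a b, ‖T a - T b‖ ≤ ‖a - b‖) {s t : ℝ}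
    (hs : s ∈ Set.Ioo (0 : ℝ) 1) (ht : t ∈ Set.Ioo (0 : ℝ) 1) (hst : s < t) {zs zt : H}
    (hzs : zs = s • T zs) (hzt : zt = t • T zt) : ‖zt - zs‖ ^ 2 ≤ ‖zt‖ ^ 2 - ‖zs‖ ^ 2 := by
  have key := one_sub_mul_inner_le hT hs.1 hzs zt
  rw [apply_eq_inv_smul_of_eq_smul_apply ht.1.ne' hzt, inner_sub_left, real_inner_smul_left]
    at key
  have hb : ⟪zt, zs - zt⟫ = ⟪zs, zs - zt⟫ - ‖zs - zt‖ ^ 2 := by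
    rw [← real_inner_self_eq_norm_sq, ← inner_sub_left, sub_sub_cancel]
  have hscale : t * (s * (t⁻¹ * ⟪zt, zs - zt⟫ - ⟪zt, zs - zt⟫))
      = s * (1 - t) * ⟪zt, zs - zt⟫ := by
    field_simp [ht.1.ne']
  have h1 := mul_le_mul_of_nonneg_left key ht.1.le
  rw [hscale, hb] at h1
  have hD : 0 ≤ s * (1 - t) * ‖zs - zt‖ ^ 2 :=
    mul_nonneg (mul_nonneg hs.1.le (sub_nonneg.2 ht.2.le)) (sq_nonneg _)
  have hnonpos : ⟪zs, zs - zt⟫ ≤ 0 :=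
    nonpos_of_mul_nonpos_right (by linarith : (t - s) * ⟪zs, zs - zt⟫ ≤ 0) (by linarith)
  rw [inner_sub_right, real_inner_self_eq_norm_sq] at hnonpos
  rw [norm_sub_sq_real, real_inner_comm]
  linarith

/-- Browder's theorem. -/
theorem exists_tendsto_of_eq_smul_apply [CompleteSpace H] (hT : ∀ a b, ‖T a - T b‖ ≤ ‖a - b‖)
    {p : H} (hp : T p = p) {t : ℕ → ℝ} (htmono : StrictMono t)
    (ht : ∀ k, t k ∈ Set.Ioo (0 : ℝ) 1) (htlim : Tendsto t atTop (𝓝 1)) {z : ℕ → H}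
    (hz : ∀ k, z k = t k • T (z k)) :
    ∃ q, Tendsto z atTop (𝓝 q) ∧ T q = q ∧ ∀ y, T y = y → ‖q‖ ≤ ‖y‖ := by
  have hnorm : ∀ k y, T y = y → ‖z k‖ ≤ ‖y‖ := fun k y hy =>
    norm_le_of_eq_smul_apply hT (ht k) (hz k) hy
  have hsq : ∀ k l, k ≤ l → ‖z l - z k‖ ^ 2 ≤ ‖z l‖ ^ 2 - ‖z k‖ ^ 2 := by
    intro k l hkl
    rcases hkl.eq_or_lt with rfl | hlt
    · simp
    · exact norm_sub_sq_le_of_eq_smul_apply hT (ht k) (ht l) (htmono hlt) (hz k) (hz l)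
  have hbdd : BddAbove (Set.range fun k => ‖z k‖ ^ 2) := ⟨‖p‖ ^ 2, by
    rintro _ ⟨k, rfl⟩
    exact pow_le_pow_left₀ (norm_nonneg _) (hnorm k p hp) 2⟩
  obtain ⟨q, hq⟩ := cauchySeq_tendsto_of_complete (cauchySeq_of_norm_sub_sq_le hbdd hsq)
  have hTcont : Continuous T :=
    (LipschitzWith.mk_one fun a b => by simpa [dist_eq_norm] using hT a b).continuous
  have hTq : T q = q := by
    have hlim := htlim.smul ((hTcont.tendsto q).comp hq)
    rw [one_smul] at hlim
    exact tendsto_nhds_unique hlim (hq.congr hz)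
  exact ⟨q, hq, hTq, fun y hy => le_of_tendsto' hq.norm fun k => hnorm k y hy⟩

theorem eventually_inner_sub_le_of_eq_smul_apply (hT : ∀ a b, ‖T a - T b‖ ≤ ‖a - b‖) {t : ℝ}
    (ht : t ∈ Set.Ioo (0 : ℝ) 1) {z : H} (hz : z = t • T z) {x : ℕ → H} {M : ℝ}
    (hxM : ∀ n, ‖x n‖ ≤ M) (hTx : Tendsto (fun n => ‖T (x n) - x n‖) atTop (𝓝 0)) {ε : ℝ}
    (hε : 0 < ε) : ∀ᶠ n in atTop, ⟪z, z - x n⟫ ≤ ε := by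
  have hlim := hTx.mul_const (‖z‖ + M)
  rw [zero_mul] at hlim
  filter_upwards [hlim.eventually (gt_mem_nhds (mul_pos (sub_pos.2 ht.2) hε))] with n hn
  have hbound : (1 - t) * ⟪z, z - x n⟫ ≤ ‖T (x n) - x n‖ * (‖z‖ + M) := calc
    _ ≤ t * ⟪T (x n) - x n, z - x n⟫ := one_sub_mul_inner_le hT ht.1 hz (x n)
    _ ≤ ‖T (x n) - x n‖ * ‖z - x n‖ := by
      have := real_inner_le_norm (T (x n) - x n) (z - x n)
      have : 0 ≤ ‖T (x n) - x n‖ * ‖z - x n‖ := by positivity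
      nlinarith [ht.1, ht.2]
    _ ≤ _ := by gcongr; exact (norm_sub_le _ _).trans (by linarith [hxM n])
  exact le_of_mul_le_mul_left (by linarith) (sub_pos.2 ht.2)

theorem eventually_inner_sub_le (hT : ∀ a b, ‖T a - T b‖ ≤ ‖a - b‖) {t : ℕ → ℝ}
    (ht : ∀ k, t k ∈ Set.Ioo (0 : ℝ) 1) {z : ℕ → H} (hz : ∀ k, z k = t k • T (z k)) {q : H}
    (hzq : Tendsto z atTop (𝓝 q)) (hq : T q = q) {x : ℕ → H} {M : ℝ} (hxM : ∀ n, ‖x n‖ ≤ M)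
    (hTx : Tendsto (fun n => ‖T (x n) - x n‖) atTop (𝓝 0)) {ε : ℝ} (hε : 0 < ε) :
    ∀ᶠ n in atTop, ⟪q, q - x n⟫ ≤ ε := by
  have hlim := (tendsto_iff_norm_sub_tendsto_zero.1 hzq).mul_const (2 * ‖q‖ + M)
  rw [zero_mul] at hlim
  obtain ⟨k, hk⟩ := (hlim.eventually (gt_mem_nhds (half_pos hε))).exists
  filter_upwards [eventually_inner_sub_le_of_eq_smul_apply hT (ht k) (hz k) hxM hTx (half_pos hε)]
    with n hn
  -- `z k` approximates `q` uniformly in `n` because `x` is bounded.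
  have hsplit : ⟪q, q - x n⟫ = ⟪z k, z k - x n⟫ + ⟪q - z k, q + z k - x n⟫ := by
    simp only [inner_sub_left, inner_sub_right, inner_add_right, real_inner_comm (z k) q]
    ring
  have hdiff : ⟪q - z k, q + z k - x n⟫ ≤ ‖z k - q‖ * (2 * ‖q‖ + M) := calc
    _ ≤ ‖q - z k‖ * ‖q + z k - x n‖ := real_inner_le_norm _ _
    _ ≤ _ := by
      rw [norm_sub_rev]
      gcongr
      linarith [norm_sub_le (q + z k) (x n), norm_add_le q (z k), hxM n,
        norm_le_of_eq_smul_apply hT (ht k) (hz k) hq]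
  linarith

end Browder

section TKM

variable {E : Type*} [NormedAddCommGroup E] [NormedSpace ℝ E] {T : E → E} {β lam : ℕ → ℝ}
  {x : ℕ → E}

theorem norm_smul_sub_le_max {b : ℝ} (hb : b ∈ Set.Icc (0 : ℝ) 1) (u p : E) :
    ‖b • u - p‖ ≤ max ‖u - p‖ ‖p‖ := by
  obtain ⟨hb0, hb1⟩ := hb
  have hsplit : b • u - p = b • (u - p) - (1 - b) • p := by module
  rw [hsplit]
  refine (norm_sub_le _ _).trans ?_
  rw [norm_smul, norm_smul, Real.norm_of_nonneg hb0, Real.norm_of_nonneg (by linarith)]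
  nlinarith [le_max_left ‖u - p‖ ‖p‖, le_max_right ‖u - p‖ ‖p‖]

theorem norm_smul_sub_smul_le {b b' : ℝ} (hb' : 0 ≤ b') (u u' : E) :
    ‖b' • u' - b • u‖ ≤ b' * ‖u' - u‖ + |b' - b| * ‖u‖ := by
  have hsplit : b' • u' - b • u = b' • (u' - u) + (b' - b) • u := by module
  rw [hsplit]
  refine (norm_add_le _ _).trans_eq ?_
  rw [norm_smul, norm_smul, Real.norm_of_nonneg hb', Real.norm_eq_abs]

theorem exists_bound_tkm (hT : ∀ a b, ‖T a - T b‖ ≤ ‖a - b‖) {p : E} (hp : T p = p)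
    (hβ : ∀ n, β n ∈ Set.Icc (0 : ℝ) 1) (hlam : ∀ n, lam n ∈ Set.Icc (0 : ℝ) 1)
    (hx : ∀ n, x (n + 1) = kmStep T (lam n) (β n • x n)) :
    ∃ M, ∀ n, ‖x n‖ ≤ M ∧ ‖T (β n • x n) - β n • x n‖ ≤ M := by
  set R := max ‖x 0 - p‖ ‖p‖
  have hyR : ∀ n, ‖x n - p‖ ≤ R → ‖β n • x n - p‖ ≤ R := fun n h =>
    (norm_smul_sub_le_max (hβ n) _ _).trans (max_le h (le_max_right _ _))
  have hxR : ∀ n, ‖x n - p‖ ≤ R := by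
    intro n
    induction n with
    | zero => exact le_max_left _ _
    | succ n ih =>
      rw [hx n]
      exact (norm_kmStep_sub_le_of_isFixedPt hT (hlam n) hp _).trans (hyR n ih)
  refine ⟨2 * R, fun n => ⟨?_, ?_⟩⟩
  · linarith [norm_sub_norm_le (x n) p, hxR n, le_max_right ‖x 0 - p‖ ‖p‖]
  · linarith [norm_apply_sub_le_of_isFixedPt hT hp (β n • x n), hyR n (hxR n)]

theorem tendsto_norm_tkm_succ_sub (hT : ∀ a b, ‖T a - T b‖ ≤ ‖a - b‖)
    (hβ : ∀ n, β n ∈ Set.Icc (0 : ℝ) 1) (hlam : ∀ n, lam n ∈ Set.Icc (0 : ℝ) 1)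
    (hβdiv : Tendsto (fun n => ∑ i ∈ range n, (1 - β i)) atTop atTop)
    (hβsum : Summable fun n => |β (n + 1) - β n|)
    (hlamsum : Summable fun n => |lam (n + 1) - lam n|) {M : ℝ}
    (hM : ∀ n, ‖x n‖ ≤ M ∧ ‖T (β n • x n) - β n • x n‖ ≤ M)
    (hx : ∀ n, x (n + 1) = kmStep T (lam n) (β n • x n)) :
    Tendsto (fun n => ‖x (n + 1) - x n‖) atTop (𝓝 0) := by
  have hstep : ∀ n, ‖x (n + 1 + 1) - x (n + 1)‖
      ≤ β (n + 1) * ‖x (n + 1) - x n‖ + M * (|β (n + 1) - β n| + |lam (n + 1) - lam n|) := by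
    intro n
    calc ‖x (n + 1 + 1) - x (n + 1)‖
        = ‖kmStep T (lam (n + 1)) (β (n + 1) • x (n + 1)) - kmStep T (lam n) (β n • x n)‖ := by
          rw [hx (n + 1), ← hx n]
      _ ≤ ‖β (n + 1) • x (n + 1) - β n • x n‖
          + |lam (n + 1) - lam n| * ‖T (β n • x n) - β n • x n‖ :=
          norm_kmStep_sub_kmStep_le hT (hlam _) _ _ _
      _ ≤ β (n + 1) * ‖x (n + 1) - x n‖ + |β (n + 1) - β n| * M
          + |lam (n + 1) - lam n| * M := by
          gcongr
          · exact (norm_smul_sub_smul_le (hβ _).1 _ _).trans (by gcongr; exact (hM n).1)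
          · exact (hM n).2
      _ = _ := by ring
  have hdiv : Tendsto (fun n => ∑ i ∈ range n, (1 - β (i + 1))) atTop atTop := by
    refine (tendsto_atTop_add_const_right _ (-(1 - β 0))
      ((tendsto_add_atTop_iff_nat 1).2 hβdiv)).congr fun n => ?_
    rw [sum_range_succ']
    ring
  have hM0 : 0 ≤ M := (norm_nonneg _).trans (hM 0).1
  refine tendsto_zero_of_le_one_sub_mul_add (δ := 0) (fun n => norm_nonneg _)
    (fun n => ⟨sub_nonneg.2 (hβ _).2, by linarith [(hβ (n + 1)).1]⟩) hdiv
    (fun ε hε => .of_forall fun _ => hε.le)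
    (fun n => mul_nonneg hM0 (by positivity)) ((hβsum.add hlamsum).mul_left M) fun n => ?_
  simpa using hstep n

theorem tendsto_norm_apply_tkm_sub (hT : ∀ a b, ‖T a - T b‖ ≤ ‖a - b‖)
    (hβ : ∀ n, β n ∈ Set.Icc (0 : ℝ) 1) (hlam : ∀ n, lam n ∈ Set.Icc (0 : ℝ) 1)
    (hβ1 : Tendsto β atTop (𝓝 1)) (hlaminf : 0 < liminf lam atTop) {M : ℝ}
    (hxM : ∀ n, ‖x n‖ ≤ M) (hreg : Tendsto (fun n => ‖x (n + 1) - x n‖) atTop (𝓝 0))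
    (hx : ∀ n, x (n + 1) = kmStep T (lam n) (β n • x n)) :
    Tendsto (fun n => ‖T (x n) - x n‖) atTop (𝓝 0) := by
  have hβM : Tendsto (fun n => (1 - β n) * M) atTop (𝓝 0) := by
    simpa using ((tendsto_const_nhds (x := (1 : ℝ))).sub hβ1).mul_const M
  have hgap : ∀ n, ‖x n - β n • x n‖ ≤ (1 - β n) * M := fun n => by
    have h1β : 0 ≤ 1 - β n := sub_nonneg.2 (hβ n).2
    rw [show x n - β n • x n = (1 - β n) • x n by module, norm_smul, Real.norm_of_nonneg h1β]
    exact mul_le_mul_of_nonneg_left (hxM n) h1β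
  have hlamlow : ∀ᶠ n in atTop, liminf lam atTop / 2 < lam n :=
    eventually_lt_of_lt_liminf (half_lt_self hlaminf)
      (isBoundedUnder_of ⟨0, fun n => (hlam n).1⟩)
  have hy : Tendsto (fun n => ‖T (β n • x n) - β n • x n‖) atTop (𝓝 0) := by
    refine squeeze_zero' (.of_forall fun n => norm_nonneg _) ?_
      (by simpa using (hreg.add hβM).div_const (liminf lam atTop / 2))
    filter_upwards [hlamlow] with n hn
    rw [le_div_iff₀ (half_pos hlaminf)]
    calc ‖T (β n • x n) - β n • x n‖ * (liminf lam atTop / 2)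
        ≤ lam n * ‖T (β n • x n) - β n • x n‖ := by
          rw [mul_comm]; gcongr
      _ = ‖x (n + 1) - β n • x n‖ := by
          rw [hx n, kmStep, add_sub_cancel_left, norm_smul, Real.norm_of_nonneg (hlam n).1]
      _ ≤ ‖x (n + 1) - x n‖ + ‖x n - β n • x n‖ := norm_sub_le_norm_sub_add_norm_sub _ _ _
      _ ≤ ‖x (n + 1) - x n‖ + (1 - β n) * M := by gcongr; exact hgap n
  refine squeeze_zero (fun n => norm_nonneg _) (fun n => ?_)
    (by simpa using (hβM.const_mul 2).add hy)
  calc ‖T (x n) - x n‖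
      = ‖(T (x n) - T (β n • x n)) + (T (β n • x n) - β n • x n) + (β n • x n - x n)‖ := by
        congr 1; abel
    _ ≤ ‖T (x n) - T (β n • x n)‖ + ‖T (β n • x n) - β n • x n‖ + ‖β n • x n - x n‖ :=
        norm_add₃_le
    _ ≤ 2 * ((1 - β n) * M) + ‖T (β n • x n) - β n • x n‖ := by
        linarith [hT (x n) (β n • x n), norm_sub_rev (β n • x n) (x n), hgap n]

end TKM

section TKMConvergence

variable {H : Type*} [NormedAddCommGroup H] [InnerProductSpace ℝ H] {T : H → H}
  {β lam : ℕ → ℝ} {x : ℕ → H}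

theorem norm_smul_sub_sq_le {b : ℝ} (hb : b ∈ Set.Icc (0 : ℝ) 1) (u q : H) :
    ‖b • u - q‖ ^ 2 ≤ b * ‖u - q‖ ^ 2 + (1 - b) * (2 * b * ⟪q, q - u⟫ + (1 - b) * ‖q‖ ^ 2) := by
  obtain ⟨hb0, hb1⟩ := hb
  have hsplit : b • u - q = b • (u - q) - (1 - b) • q := by module
  have hinner : ⟪u - q, q⟫ = -⟪q, q - u⟫ := by
    rw [real_inner_comm, ← inner_neg_right, neg_sub]
  rw [hsplit, norm_sub_sq_real, norm_smul, norm_smul, real_inner_smul_left,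
    real_inner_smul_right, Real.norm_of_nonneg hb0, Real.norm_of_nonneg (sub_nonneg.2 hb1),
    hinner]
  nlinarith [mul_le_mul_of_nonneg_right (mul_le_of_le_one_left hb0 hb1) (sq_nonneg ‖u - q‖)]

theorem tendsto_tkm_of_eventually_inner_le (hT : ∀ a b, ‖T a - T b‖ ≤ ‖a - b‖) {q : H}
    (hq : T q = q) (hβ : ∀ n, β n ∈ Set.Icc (0 : ℝ) 1) (hlam : ∀ n, lam n ∈ Set.Icc (0 : ℝ) 1)
    (hβ1 : Tendsto β atTop (𝓝 1))
    (hβdiv : Tendsto (fun n => ∑ i ∈ range n, (1 - β i)) atTop atTop)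
    (hx : ∀ n, x (n + 1) = kmStep T (lam n) (β n • x n))
    (hlim : ∀ ε > 0, ∀ᶠ n in atTop, ⟪q, q - x n⟫ ≤ ε) :
    Tendsto x atTop (𝓝 q) := by
  set δ := fun n => 2 * β n * ⟪q, q - x n⟫ + (1 - β n) * ‖q‖ ^ 2
  have hrec : ∀ n, ‖x (n + 1) - q‖ ^ 2
      ≤ (1 - (1 - β n)) * ‖x n - q‖ ^ 2 + (1 - β n) * δ n + 0 := by
    intro n
    rw [sub_sub_cancel, add_zero, hx n]
    calc ‖kmStep T (lam n) (β n • x n) - q‖ ^ 2 ≤ ‖β n • x n - q‖ ^ 2 := by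
          gcongr; exact norm_kmStep_sub_le_of_isFixedPt hT (hlam n) hq _
      _ ≤ _ := norm_smul_sub_sq_le (hβ n) _ _
  have hδ : ∀ ε > 0, ∀ᶠ n in atTop, δ n ≤ ε := by
    intro ε hε
    have hβq : Tendsto (fun n => (1 - β n) * ‖q‖ ^ 2) atTop (𝓝 0) := by
      simpa using ((tendsto_const_nhds (x := (1 : ℝ))).sub hβ1).mul_const (‖q‖ ^ 2)
    filter_upwards [hlim (ε / 4) (by positivity), hβq.eventually (ge_mem_nhds (half_pos hε))]
      with n h1 h2
    obtain ⟨hb0, hb1⟩ := hβ n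
    nlinarith [mul_nonneg hb0 (sub_nonneg.2 h1)]
  have hsq : Tendsto (fun n => ‖x n - q‖ ^ 2) atTop (𝓝 0) :=
    tendsto_zero_of_le_one_sub_mul_add (fun n => sq_nonneg _)
      (fun n => ⟨sub_nonneg.2 (hβ n).2, by linarith [(hβ n).1]⟩) hβdiv hδ (fun _ => le_rfl)
      summable_zero hrec
  rw [tendsto_iff_norm_sub_tendsto_zero]
  simpa using hsq.sqrt

end TKMConvergence

/-- Theorem 3 of Boţ–Csetnek–Meier. Strong convergence of the
Tikhonov-regularized Krasnosel'skiĭ–Mann iteration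
`x_{n+1} = β_n x_n + λ_n (T(β_n x_n) − β_n x_n)` to the metric projection of `0`
onto `Fix T` (characterized as the unique fixed point of minimal norm). -/
theorem tkm_strong_convergence
    {H : Type*} [NormedAddCommGroup H] [InnerProductSpace ℝ H] [CompleteSpace H]
    (T : H → H) (hT : ∀ a b : H, ‖T a - T b‖ ≤ ‖a - b‖)
    (hFix : ∃ p : H, T p = p)
    (β lam : ℕ → ℝ)
    (hβ : ∀ n, β n ∈ Set.Ioc (0 : ℝ) 1)
    (hlam : ∀ n, lam n ∈ Set.Ioc (0 : ℝ) 1)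
    (hβ1 : Filter.Tendsto β Filter.atTop (nhds 1))
    (hβdiv : Filter.Tendsto (fun n => ∑ i ∈ Finset.range n, (1 - β i))
      Filter.atTop Filter.atTop)
    (hβsum : Summable (fun n => |β (n + 1) - β n|))
    (hlaminf : 0 < Filter.liminf lam Filter.atTop)
    (hlamsum : Summable (fun n => |lam (n + 1) - lam n|))
    (x : ℕ → H)
    (hx : ∀ n, x (n + 1) = β n • x n + lam n • (T (β n • x n) - β n • x n)) :
    ∃ q : H, T q = q ∧ (∀ y : H, T y = y → ‖q‖ ≤ ‖y‖) ∧
      Filter.Tendsto x Filter.atTop (nhds q) := by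
  obtain ⟨p, hp⟩ := hFix
  have hβ' : ∀ n, β n ∈ Set.Icc (0 : ℝ) 1 := fun n => Set.Ioc_subset_Icc_self (hβ n)
  have hlam' : ∀ n, lam n ∈ Set.Icc (0 : ℝ) 1 := fun n => Set.Ioc_subset_Icc_self (hlam n)
  have hx' : ∀ n, x (n + 1) = kmStep T (lam n) (β n • x n) := hx
  obtain ⟨t, htmono, ht, htlim⟩ := exists_seq_strictMono_tendsto' (zero_lt_one' ℝ)
  choose z hz using fun k => exists_eq_smul_apply hT (Set.Ioo_subset_Ico_self (ht k))
  obtain ⟨q, hzq, hq, hqmin⟩ := exists_tendsto_of_eq_smul_apply hT hp htmono ht htlim hz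
  obtain ⟨M, hM⟩ := exists_bound_tkm hT hp hβ' hlam' hx'
  have hreg := tendsto_norm_tkm_succ_sub hT hβ' hlam' hβdiv hβsum hlamsum hM hx'
  have hTx := tendsto_norm_apply_tkm_sub hT hβ' hlam' hβ1 hlaminf (fun n => (hM n).1) hreg hx'
  exact ⟨q, hq, hqmin, tendsto_tkm_of_eventually_inner_le hT hq hβ' hlam' hβ1 hβdiv hx'
    fun ε hε => eventually_inner_sub_le hT ht hz hzq hq (fun n => (hM n).1) hTx hε⟩
end

section
/- Let (s_n) be a sequence of non-negative real numbers with s_n ≤ d for all n, where d ∈ ℕ∖{0}, and suppose that for all n ∈ ℕ, s_{n+1} ≤ (1−α_n) s_n + α_n r_n + γ_n, where (α_n) ⊂ [0,1], (r_n) is a sequence of real numbers and (γ_n) ⊂ [0,∞). Assume there exist functions A, R, G : ℕ → ℕ such that for all k ∈ ℕ: (i) Σ_{i=1}^{A(k)} α_i ≥ k; (ii) r_n ≤ 1/(k+1) for all n ≥ R(k); (iii) Σ_{i=G(k)+1}^{G(k)+n} γ_i ≤ 1/(k+1) for all n ∈ ℕ. Then for every k ∈ ℕ and every n ≥ θ(k)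 one has s_n ≤ 1/(k+1), where θ(k) := A(M − 1 + ⌈ln(3d(k+1))⌉) + 1 and M := max{R(3k+2), G(3k+2)+1}. -/
/-! Unrolling the recursion from an index `m` past which `r ≤ B` gives
`s n ≤ (∏_{m ≤ i < n} (1 - α i)) s m + B + ∑_{m ≤ i < n} γ i`, and `1 - x ≤ exp (-x)` bounds the
product by `exp (-∑_{m ≤ i < n} α i)`. With `m := M`, so that `r ≤ 1/(3(k+1))` and the `γ`-tail is
at most `1/(3(k+1))`, condition (i) at `M - 1 + ⌈ln (3d(k+1))⌉` makes the `α`-sum over `[M, n)` at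
least `ln (3d(k+1))`; as `s M ≤ d`, each of the three terms is at most `1/(3(k+1))`. -/

open Finset Real

theorem Finset.prod_one_sub_le_exp_neg_sum {ι : Type*} (t : Finset ι) (a : ι → ℝ)
    (ha : ∀ i ∈ t, a i ≤ 1) : ∏ i ∈ t, (1 - a i) ≤ exp (-∑ i ∈ t, a i) := by
  rw [← sum_neg_distrib, exp_sum]
  exact prod_le_prod (fun i hi => sub_nonneg.2 (ha i hi)) fun i _ => one_sub_le_exp_neg (a i)

theorem le_of_natCast_le_sum_Icc_one (a : ℕ → ℝ) (ha : ∀ i, a i ≤ 1) {j t : ℕ}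
    (h : (j : ℝ) ≤ ∑ i ∈ Icc 1 t, a i) : j ≤ t := by
  have : ∑ i ∈ Icc 1 t, a i ≤ t := by
    simpa using sum_le_card_nsmul (Icc 1 t) a 1 fun i _ => ha i
  exact_mod_cast h.trans this

theorem natCast_le_sum_Ico_of_le_sum_Icc_one (a : ℕ → ℝ) (ha₀ : ∀ i, 0 ≤ a i)
    (ha₁ : ∀ i, a i ≤ 1) {j c t n : ℕ} (h : ((j + c : ℕ) : ℝ) ≤ ∑ i ∈ Icc 1 t, a i)
    (htn : t < n) : (c : ℝ) ≤ ∑ i ∈ Ico (j + 1) n, a i := by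
  have hdisj : Disjoint (Icc 1 j) (Ico (j + 1) n) :=
    disjoint_left.2 fun i hi hi' => by simp only [mem_Icc, mem_Ico] at hi hi'; omega
  have hsub : Icc 1 t ⊆ Icc 1 j ∪ Ico (j + 1) n := fun i hi => by
    simp only [mem_union, mem_Icc, mem_Ico] at hi ⊢; omega
  have hhead : ∑ i ∈ Icc 1 j, a i ≤ j := by
    simpa using sum_le_card_nsmul (Icc 1 j) a 1 fun i _ => ha₁ i
  have htail : ∑ i ∈ Icc 1 t, a i ≤ ∑ i ∈ Icc 1 j, a i + ∑ i ∈ Ico (j + 1) n, a i := by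
    rw [← sum_union hdisj]
    exact sum_le_sum_of_subset_of_nonneg hsub fun i _ _ => ha₀ i
  push_cast at h
  linarith

theorem sum_Ico_le_sum_Icc_add (a : ℕ → ℝ) (ha : ∀ i, 0 ≤ a i) {g m : ℕ} (hgm : g + 1 ≤ m)
    (n : ℕ) : ∑ i ∈ Ico m n, a i ≤ ∑ i ∈ Icc (g + 1) (g + n), a i := by
  refine sum_le_sum_of_subset_of_nonneg (fun i hi => ?_) fun i _ _ => ha i
  simp only [mem_Ico, mem_Icc] at hi ⊢
  omega

section Recursion

variable {s α r γ : ℕ → ℝ}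

theorem le_prod_mul_add_mul_add_sum_of_rec (hα : ∀ n, α n ∈ Set.Icc (0 : ℝ) 1)
    (hγ : ∀ n, 0 ≤ γ n) (hrec : ∀ n, s (n + 1) ≤ (1 - α n) * s n + α n * r n + γ n)
    {B : ℝ} {m : ℕ} (hr : ∀ i, m ≤ i → r i ≤ B) {n : ℕ} (hmn : m ≤ n) :
    s n ≤ (∏ i ∈ Ico m n, (1 - α i)) * s m + B * (1 - ∏ i ∈ Ico m n, (1 - α i))
      + ∑ i ∈ Ico m n, γ i := by
  induction n, hmn using Nat.le_induction with
  | base => simp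
  | succ n hmn ih =>
    rw [prod_Ico_succ_top hmn, sum_Ico_succ_top hmn]
    obtain ⟨hα₀, hα₁⟩ := hα n
    have hrn := hr n hmn
    have hΓ : 0 ≤ ∑ i ∈ Ico m n, γ i := sum_nonneg fun i _ => hγ i
    have hrec' := hrec n
    have ih' := mul_le_mul_of_nonneg_left ih (sub_nonneg.2 hα₁)
    nlinarith [mul_nonneg hα₀ (sub_nonneg.2 hrn), mul_nonneg hα₀ hΓ]

theorem le_exp_neg_sum_mul_add_add_sum_of_rec (hs : ∀ n, 0 ≤ s n)
    (hα : ∀ n, α n ∈ Set.Icc (0 : ℝ) 1) (hγ : ∀ n, 0 ≤ γ n)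
    (hrec : ∀ n, s (n + 1) ≤ (1 - α n) * s n + α n * r n + γ n)
    {B : ℝ} (hB : 0 ≤ B) {m : ℕ} (hr : ∀ i, m ≤ i → r i ≤ B) {n : ℕ} (hmn : m ≤ n) :
    s n ≤ exp (-∑ i ∈ Ico m n, α i) * s m + B + ∑ i ∈ Ico m n, γ i := by
  have hP₀ : 0 ≤ ∏ i ∈ Ico m n, (1 - α i) := prod_nonneg fun i _ => sub_nonneg.2 (hα i).2
  have hP := (Ico m n).prod_one_sub_le_exp_neg_sum α fun i _ => (hα i).2
  have := le_prod_mul_add_mul_add_sum_of_rec hα hγ hrec hr hmn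
  nlinarith [mul_le_mul_of_nonneg_right hP (hs m), mul_nonneg hB hP₀]

end Recursion

/-- quantitative Xu-type lemma. -/
theorem quantitative_lemma_LLPP
    (d : ℕ) (hd : 0 < d)
    (s α r γ : ℕ → ℝ)
    (hs : ∀ n, 0 ≤ s n) (hsd : ∀ n, s n ≤ d)
    (hα : ∀ n, α n ∈ Set.Icc (0 : ℝ) 1)
    (hγ : ∀ n, 0 ≤ γ n)
    (hrec : ∀ n, s (n + 1) ≤ (1 - α n) * s n + α n * r n + γ n)
    (A R G : ℕ → ℕ)
    (hA : ∀ k : ℕ, (k : ℝ) ≤ ∑ i ∈ Finset.Icc 1 (A k), α i)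
    (hR : ∀ k n, R k ≤ n → r n ≤ 1 / (k + 1))
    (hG : ∀ k n, ∑ i ∈ Finset.Icc (G k + 1) (G k + n), γ i ≤ 1 / (k + 1)) :
    ∀ k n,
      A (max (R (3 * k + 2)) (G (3 * k + 2) + 1) - 1
          + Nat.ceil (Real.log (3 * (d : ℝ) * (k + 1)))) + 1 ≤ n →
      s n ≤ 1 / (k + 1) := by
  intro k n hn
  set M := max (R (3 * k + 2)) (G (3 * k + 2) + 1)
  set x : ℝ := 3 * d * (k + 1) with hx_def
  have hx : 0 < x := by positivity
  have hK : ((3 * k + 2 : ℕ) : ℝ) + 1 = 3 * (k + 1) := by push_cast; ring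
  have hM : M - 1 + 1 = M := Nat.sub_add_cancel (by omega)
  have hMn : M ≤ n := by
    have := le_of_natCast_le_sum_Icc_one α (fun i => (hα i).2) (hA (M - 1 + ⌈log x⌉₊))
    omega
  have hαsum : log x ≤ ∑ i ∈ Ico M n, α i := by
    rw [← hM]
    exact (Nat.le_ceil _).trans (natCast_le_sum_Ico_of_le_sum_Icc_one α (fun i => (hα i).1)
      (fun i => (hα i).2) (hA _) (by omega))
  have hγsum : ∑ i ∈ Ico M n, γ i ≤ 1 / (3 * (k + 1)) := by
    rw [← hK]
    exact (sum_Ico_le_sum_Icc_add γ hγ (le_max_right _ _) n).trans (hG _ n)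
  have hr : ∀ i, M ≤ i → r i ≤ 1 / (3 * (k + 1)) := fun i hi => by
    rw [← hK]; exact hR _ i (le_trans (le_max_left _ _) hi)
  have hhead : exp (-∑ i ∈ Ico M n, α i) * s M ≤ 1 / (3 * (k + 1)) :=
    calc exp (-∑ i ∈ Ico M n, α i) * s M ≤ exp (-log x) * d :=
          mul_le_mul (exp_le_exp.2 (neg_le_neg hαsum)) (hsd M) (hs M) (exp_pos _).le
      _ = 1 / (3 * (k + 1)) := by
          rw [exp_neg, exp_log hx, hx_def]; field_simp
  have hbound := le_exp_neg_sum_mul_add_add_sum_of_rec hs hα hγ hrec (by positivity) hr hMn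
  have h3 : 3 * (1 / (3 * ((k : ℝ) + 1))) = 1 / (k + 1) := by field_simp
  linarith
end

section
/- Let H be a real Hilbert space, T : H → H nonexpansive, and N ∈ ℕ∖{0} such that N ≥ 2‖p‖ for some p ∈ Fix T. Then for every k ∈ ℕ and every monotone function f : ℕ → ℕ there exist n ≤ 24N(f̌^{(R)}(0)+1)² and x ∈ B_N such that ‖T(x) − x‖ ≤ 1/(f(n)+1) and for all y ∈ B_N, if ‖T(y) − y‖ ≤ 1/(n+1) then ⟪x, x − y⟫ ≤ 1/(k+1); here R := 4N⁴(k+1)², f̌(m) := max{f(24N(m+1)²), 24N(m+1)²}, and f̌^{(R)} denotes the R-fold composition of f̌ with itself. -/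
/-- `f̌(m) := max{f(24N(m+1)²), 24N(m+1)²}`. -/
def fcheck (N : ℕ) (f : ℕ → ℕ) (m : ℕ) : ℕ :=
  max (f (24 * N * (m + 1) ^ 2)) (24 * N * (m + 1) ^ 2)

/-!
Let `A j` be the set of `1 / (n_j + 1)`-approximate fixed points in `B_N`, where
`n_j = 24 N (f̌^[j] 0 + 1)²`, and let `c j` be the infimum of `‖·‖²` on `A j`. All `c j` lie in
`[0, ‖p‖²] ⊆ [0, N² / 4]`, so by telescoping some gap `c (2i+2) - c (2i)` is tiny. Take `x`
almost minimizing `‖·‖²` on `A (2i+2)` and `n := n_(2i+1)`. For a `1 / (n + 1)`-approximate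
fixed point `y ∈ B_N`, the Hilbert-space identity for `‖T z - z‖²` along the segment `[x, y]`
shows that a short step `z` from `x` towards `y` lies in `A (2i)`, since `n_(2i+1)` is much larger
than `n_(2i)`. Hence `‖z‖² ≥ c (2i) ≈ ‖x‖²`, which expands to `⟪x, x - y⟫ ≤ 1 / (k + 1)`: a
metastable form of the variational inequality characterising the projection onto `Fix T`.
Finally `f n ≤ n_(2i+2)` by the definition of `f̌`.
-/

open AffineMap
open scoped RealInnerProductSpace

theorem exists_succ_sub_le_div (g : ℕ → ℝ) {L : ℕ} (hL : 0 < L) :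
    ∃ i < L, g (i + 1) - g i ≤ (g L - g 0) / L := by
  have hsum :
      ∑ i ∈ Finset.range L, (g (i + 1) - g i) ≤ ∑ _i ∈ Finset.range L, (g L - g 0) / L := by
    rw [Finset.sum_range_sub, Finset.sum_const, Finset.card_range, nsmul_eq_mul,
      mul_div_cancel₀ _ (by positivity)]
  obtain ⟨i, hi, h⟩ := Finset.exists_le_of_sum_le (Finset.nonempty_range_iff.mpr hL.ne') hsum
  exact ⟨i, Finset.mem_range.mp hi, h⟩

section MinNormSq

variable {E : Type*} [Norm E] {s : Set E}

/-- This is `0` when `s` is empty, by the convention `sInf ∅ = 0`. -/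
noncomputable def minNormSq (s : Set E) : ℝ := sInf ((fun y => ‖y‖ ^ 2) '' s)

theorem minNormSq_nonneg (s : Set E) : 0 ≤ minNormSq s :=
  Real.sInf_nonneg (by rintro _ ⟨y, -, rfl⟩; positivity)

theorem bddBelow_image_norm_sq (s : Set E) : BddBelow ((fun y => ‖y‖ ^ 2) '' s) :=
  ⟨0, by rintro _ ⟨y, -, rfl⟩; positivity⟩

theorem minNormSq_le {y : E} (hy : y ∈ s) : minNormSq s ≤ ‖y‖ ^ 2 :=
  csInf_le (bddBelow_image_norm_sq s) ⟨y, hy, rfl⟩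

theorem exists_norm_sq_lt_minNormSq_add (hs : s.Nonempty) {ε : ℝ} (hε : 0 < ε) :
    ∃ x ∈ s, ‖x‖ ^ 2 < minNormSq s + ε := by
  obtain ⟨_, ⟨x, hx, rfl⟩, h⟩ := exists_lt_of_csInf_lt (hs.image _) (lt_add_of_pos_right _ hε)
  exact ⟨x, hx, h⟩

theorem exists_minNormSq_succ_le_add {s : ℕ → Set E} {p : E} (hp : ∀ j, p ∈ s j) {L : ℕ}
    (hL : 0 < L) : ∃ i < L, minNormSq (s (i + 1)) ≤ minNormSq (s i) + ‖p‖ ^ 2 / L := by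
  obtain ⟨i, hiL, hi⟩ := exists_succ_sub_le_div (fun i => minNormSq (s i)) hL
  have hspan : minNormSq (s L) - minNormSq (s 0) ≤ ‖p‖ ^ 2 := by
    linarith [minNormSq_le (hp L), minNormSq_nonneg (s 0)]
  exact ⟨i, hiL, by linarith [hi.trans (div_le_div_of_nonneg_right hspan L.cast_nonneg)]⟩

end MinNormSq

section ApproxFixSet

variable {E : Type*} [SeminormedAddGroup E] (T : E → E) (p : E)

def approxFixSet (r : ℝ) (n : ℕ) : Set E := {y | ‖y - p‖ ≤ r ∧ ‖T y - y‖ ≤ 1 / (n + 1)}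

theorem approxFixSet_anti (r : ℝ) : Antitone (approxFixSet T p r) :=
  fun _ _ hnm _ hy => ⟨hy.1, hy.2.trans (by gcongr)⟩

theorem mem_approxFixSet_self (hp : T p = p) {r : ℝ} (hr : 0 ≤ r) (n : ℕ) :
    p ∈ approxFixSet T p r n := by
  simp only [approxFixSet, Set.mem_ofPred_eq, hp, sub_self, norm_zero]
  exact ⟨hr, by positivity⟩

end ApproxFixSet

section InnerProductSpace

variable {E : Type*} [NormedAddCommGroup E] [InnerProductSpace ℝ E]

theorem norm_sub_lineMap_sq (w x y : E) (t : ℝ) :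
    ‖w - lineMap x y t‖ ^ 2
      = (1 - t) * ‖w - x‖ ^ 2 + t * ‖w - y‖ ^ 2 - t * (1 - t) * ‖x - y‖ ^ 2 := by
  have hw : w - lineMap x y t = (1 - t) • (w - x) + t • (w - y) := by
    rw [lineMap_apply_module]; module
  have hxy : ‖x - y‖ ^ 2 = ‖w - y‖ ^ 2 - 2 * ⟪w - y, w - x⟫ + ‖w - x‖ ^ 2 := by
    rw [← norm_sub_sq_real, sub_sub_sub_cancel_left]
  rw [hw, hxy, norm_add_sq_real, norm_smul, norm_smul, real_inner_smul_left,
    real_inner_smul_right, real_inner_comm (w - y), Real.norm_eq_abs, Real.norm_eq_abs, mul_pow,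
    mul_pow, sq_abs, sq_abs]
  ring

theorem norm_lineMap_sq (x y : E) (t : ℝ) :
    ‖lineMap x y t‖ ^ 2 = ‖x‖ ^ 2 - 2 * t * ⟪x, x - y⟫ + t ^ 2 * ‖x - y‖ ^ 2 := by
  have hz : lineMap x y t = x - t • (x - y) := by rw [lineMap_apply_module]; module
  rw [hz, norm_sub_sq_real, real_inner_smul_right, norm_smul, Real.norm_eq_abs, mul_pow, sq_abs]
  ring

theorem inner_le_of_norm_sq_le_minNormSq_add {s : Set E} {x y : E} {t ε : ℝ} (ht : 0 < t)
    (hx : ‖x‖ ^ 2 ≤ minNormSq s + ε) (hz : lineMap x y t ∈ s) :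
    ⟪x, x - y⟫ ≤ t / 2 * ‖x - y‖ ^ 2 + ε / (2 * t) := by
  have h := minNormSq_le hz
  rw [norm_lineMap_sq] at h
  have key : 2 * t * ⟪x, x - y⟫ ≤ t ^ 2 * ‖x - y‖ ^ 2 + ε := by linarith
  calc ⟪x, x - y⟫ = 2 * t * ⟪x, x - y⟫ / (2 * t) := by field_simp
    _ ≤ (t ^ 2 * ‖x - y‖ ^ 2 + ε) / (2 * t) := by gcongr
    _ = t / 2 * ‖x - y‖ ^ 2 + ε / (2 * t) := by field_simp

theorem inner_le_of_forall_lineMap_mem {s : Set E} {x y : E} {r ε : ℝ} (hε₀ : 0 < ε)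
    (hε₁ : ε ≤ 1) (hr : 1 ≤ r) (hxy : ‖x - y‖ ≤ 2 * r)
    (hx : ‖x‖ ^ 2 ≤ minNormSq s + ε ^ 2 / (4 * r ^ 2))
    (hs : ∀ t : ℝ, 0 ≤ t → t ≤ 1 → t * ‖x - y‖ ≤ 1 / 2 → lineMap x y t ∈ s) :
    ⟪x, x - y⟫ ≤ ε := by
  -- this step size makes both error terms of `inner_le_of_norm_sq_le_minNormSq_add` equal `ε / 2`
  set t := ε / (4 * r ^ 2)
  have ht₀ : 0 < t := by positivity
  have ht₁ : t ≤ 1 := by rw [div_le_one (by positivity)]; nlinarith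
  have hts : t * ‖x - y‖ ≤ 1 / 2 := calc
    t * ‖x - y‖ ≤ t * (2 * r) := by gcongr
    _ ≤ 1 / 2 := by
      rw [div_mul_eq_mul_div, div_le_div_iff₀ (by positivity) (by positivity)]
      nlinarith
  calc ⟪x, x - y⟫ ≤ t / 2 * ‖x - y‖ ^ 2 + ε ^ 2 / (4 * r ^ 2) / (2 * t) :=
        inner_le_of_norm_sq_le_minNormSq_add ht₀ hx (hs t ht₀.le ht₁ hts)
    _ ≤ t / 2 * (2 * r) ^ 2 + ε ^ 2 / (4 * r ^ 2) / (2 * t) := by gcongr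
    _ = ε := by simp only [t]; field_simp; ring

theorem norm_apply_lineMap_sub_sq_le {T : E → E} (hT : ∀ a b, ‖T a - T b‖ ≤ ‖a - b‖)
    {x y : E} {δ t : ℝ} (hx : ‖T x - x‖ ≤ δ) (hy : ‖T y - y‖ ≤ δ) (ht₀ : 0 ≤ t) (ht₁ : t ≤ 1) :
    ‖T (lineMap x y t) - lineMap x y t‖ ^ 2 ≤ 4 * t * (1 - t) * ‖x - y‖ * δ + δ ^ 2 := by
  set z := lineMap x y t
  have hzx : ‖z - x‖ = t * ‖x - y‖ := by
    rw [← dist_eq_norm, dist_lineMap_left, Real.norm_eq_abs, abs_of_nonneg ht₀, dist_eq_norm]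
  have hzy : ‖z - y‖ = (1 - t) * ‖x - y‖ := by
    rw [← dist_eq_norm, dist_lineMap_right, Real.norm_eq_abs, abs_of_nonneg (by linarith),
      dist_eq_norm]
  have hTzx : ‖T z - x‖ ≤ t * ‖x - y‖ + δ :=
    (norm_sub_le_norm_sub_add_norm_sub _ (T x) _).trans (by linarith [hT z x])
  have hTzy : ‖T z - y‖ ≤ (1 - t) * ‖x - y‖ + δ :=
    (norm_sub_le_norm_sub_add_norm_sub _ (T y) _).trans (by linarith [hT z y])
  have hsx := mul_le_mul_of_nonneg_left (pow_le_pow_left₀ (norm_nonneg _) hTzx 2)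
    (sub_nonneg.mpr ht₁)
  have hsy := mul_le_mul_of_nonneg_left (pow_le_pow_left₀ (norm_nonneg _) hTzy 2) ht₀
  rw [norm_sub_lineMap_sq]
  linear_combination hsx + hsy

theorem lineMap_mem_approxFixSet {T : E → E} (hT : ∀ a b, ‖T a - T b‖ ≤ ‖a - b‖) {p x y : E}
    {r t : ℝ} {m n : ℕ} (hx : x ∈ approxFixSet T p r n) (hy : y ∈ approxFixSet T p r n)
    (ht₀ : 0 ≤ t) (ht₁ : t ≤ 1) (hts : t * ‖x - y‖ ≤ 1 / 2) (hmn : 3 * (m + 1) ^ 2 ≤ n + 1) :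
    lineMap x y t ∈ approxFixSet T p r m := by
  refine ⟨?_, ?_⟩
  · have := (convex_closedBall p r).lineMap_mem (by simpa [dist_eq_norm] using hx.1)
      (by simpa [dist_eq_norm] using hy.1) ⟨ht₀, ht₁⟩
    simpa [dist_eq_norm] using this
  set δ : ℝ := 1 / (n + 1)
  have hδ₀ : 0 ≤ δ := by positivity
  have hδ₁ : δ ≤ 1 := div_le_one_of_le₀ (by linarith [n.cast_nonneg (α := ℝ)]) (by positivity)
  have hδm : 3 * δ ≤ (1 / (m + 1)) ^ 2 := by
    have : 3 * ((m : ℝ) + 1) ^ 2 ≤ n + 1 := by exact_mod_cast hmn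
    rw [div_pow, one_pow, mul_one_div, div_le_div_iff₀ (by positivity) (by positivity)]
    linarith
  have hsq := norm_apply_lineMap_sub_sq_le hT hx.2 hy.2 ht₀ ht₁
  have hst : t * (1 - t) * ‖x - y‖ ≤ 1 / 2 := by nlinarith [norm_nonneg (x - y)]
  refine (pow_le_pow_iff_left₀ (norm_nonneg _) (by positivity) two_ne_zero).mp ?_
  nlinarith

end InnerProductSpace

section Levels

variable {N : ℕ} {f : ℕ → ℕ}

def fcheckLevel (N : ℕ) (f : ℕ → ℕ) (j : ℕ) : ℕ := 24 * N * ((fcheck N f)^[j] 0 + 1) ^ 2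

theorem fcheckLevel_le_iterate_succ (j : ℕ) : fcheckLevel N f j ≤ (fcheck N f)^[j + 1] 0 := by
  rw [Function.iterate_succ_apply']
  exact le_max_right _ _

theorem iterate_lt_fcheckLevel (hN : 0 < N) (j : ℕ) : (fcheck N f)^[j] 0 < fcheckLevel N f j := by
  have h : (fcheck N f)^[j] 0 + 1 ≤ ((fcheck N f)^[j] 0 + 1) ^ 2 := Nat.le_self_pow two_ne_zero _
  have : 1 ≤ 24 * N := by omega
  unfold fcheckLevel
  nlinarith

theorem fcheckLevel_mono (hN : 0 < N) : Monotone (fcheckLevel N f) := by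
  refine monotone_nat_of_le_succ fun j => ?_
  have := (iterate_lt_fcheckLevel (f := f) hN j).le.trans (fcheckLevel_le_iterate_succ j)
  unfold fcheckLevel
  gcongr

theorem apply_fcheckLevel_le (hN : 0 < N) (j : ℕ) :
    f (fcheckLevel N f j) ≤ fcheckLevel N f (j + 1) := by
  have : f (fcheckLevel N f j) ≤ (fcheck N f)^[j + 1] 0 := by
    rw [Function.iterate_succ_apply']
    exact le_max_left _ _
  exact this.trans (iterate_lt_fcheckLevel hN _).le

theorem three_mul_sq_le_fcheckLevel_succ (hN : 0 < N) (j : ℕ) :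
    3 * (fcheckLevel N f j + 1) ^ 2 ≤ fcheckLevel N f (j + 1) + 1 := by
  have h := fcheckLevel_le_iterate_succ (f := f) (N := N) j
  calc 3 * (fcheckLevel N f j + 1) ^ 2 ≤ 24 * N * ((fcheck N f)^[j + 1] 0 + 1) ^ 2 := by
        gcongr; omega
    _ ≤ fcheckLevel N f (j + 1) + 1 := Nat.le_succ _

end Levels

theorem quantitative_projection_general
    {H : Type*} [NormedAddCommGroup H] [InnerProductSpace ℝ H]
    (T : H → H) (hT : ∀ a b : H, ‖T a - T b‖ ≤ ‖a - b‖)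
    (p : H) (hp : T p = p)
    (N : ℕ) (hN : 0 < N) (hNp : 2 * ‖p‖ ≤ (N : ℝ))
    (k : ℕ) (f : ℕ → ℕ) :
    ∃ n ≤ 24 * N * ((fcheck N f)^[4 * N ^ 4 * (k + 1) ^ 2] 0 + 1) ^ 2,
      ∃ x : H, ‖x - p‖ ≤ (N : ℝ) ∧
        ‖T x - x‖ ≤ 1 / (f n + 1) ∧
        ∀ y : H, ‖y - p‖ ≤ (N : ℝ) → ‖T y - y‖ ≤ 1 / (n + 1) →
          (inner ℝ x (x - y) : ℝ) ≤ 1 / (k + 1) := by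
  set A : ℕ → Set H := fun j => approxFixSet T p N (fcheckLevel N f j)
  have hpA (j : ℕ) : p ∈ A j := mem_approxFixSet_self T p hp N.cast_nonneg _
  have hN1 : (1 : ℝ) ≤ N := by exact_mod_cast hN
  set L := 2 * N ^ 4 * (k + 1) ^ 2
  have hR : 4 * N ^ 4 * (k + 1) ^ 2 = 2 * L := by ring
  set η : ℝ := (N ^ 2 / 4) / L
  have hpη : ‖p‖ ^ 2 / L ≤ η := by
    simp only [η]; gcongr; nlinarith [norm_nonneg p]
  obtain ⟨i, hiL, hgap⟩ :=
    exists_minNormSq_succ_le_add (s := fun i => A (2 * i)) (fun _ => hpA _) (L := L)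
      (by positivity)
  obtain ⟨x, hxA, hx⟩ :=
    exists_norm_sq_lt_minNormSq_add ⟨p, hpA (2 * (i + 1))⟩ (by positivity : 0 < η)
  refine ⟨fcheckLevel N f (2 * i + 1), fcheckLevel_mono hN (by omega), x, hxA.1,
    hxA.2.trans (by gcongr; exact apply_fcheckLevel_le hN _), fun y hy hTy => ?_⟩
  refine inner_le_of_forall_lineMap_mem (r := N) (s := A (2 * i)) (by positivity) ?_ hN1 ?_ ?_
    fun t ht₀ ht₁ hts => ?_
  · rw [div_le_one (by positivity)]; linarith [k.cast_nonneg (α := ℝ)]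
  · linarith [norm_sub_le_norm_sub_add_norm_sub x p y, norm_sub_rev p y, hxA.1]
  · have h2η : 2 * η = (1 / (k + 1)) ^ 2 / (4 * N ^ 2) := by
      simp only [η, L]; push_cast; field_simp
    linarith
  · have hxA' := approxFixSet_anti T p N (fcheckLevel_mono hN (Nat.le_succ (2 * i + 1))) hxA
    exact lineMap_mem_approxFixSet hT hxA' ⟨hy, hTy⟩ ht₀ ht₁ hts
      (three_mul_sq_le_fcheckLevel_succ hN _)

/-- quantitative weak form of the projection argument. -/
theorem quantitative_projection
    {H : Type*} [NormedAddCommGroup H] [InnerProductSpace ℝ H] [CompleteSpace H]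
    (T : H → H) (hT : ∀ a b : H, ‖T a - T b‖ ≤ ‖a - b‖)
    (p : H) (hp : T p = p)
    (N : ℕ) (hN : 0 < N) (hNp : 2 * ‖p‖ ≤ (N : ℝ))
    (k : ℕ) (f : ℕ → ℕ) (hf : Monotone f) :
    ∃ n ≤ 24 * N * ((fcheck N f)^[4 * N ^ 4 * (k + 1) ^ 2] 0 + 1) ^ 2,
      ∃ x : H, ‖x - p‖ ≤ (N : ℝ) ∧
        ‖T x - x‖ ≤ 1 / (f n + 1) ∧
        ∀ y : H, ‖y - p‖ ≤ (N : ℝ) → ‖T y - y‖ ≤ 1 / (n + 1) →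
          (inner ℝ x (x - y) : ℝ) ≤ 1 / (k + 1) :=
  quantitative_projection_general T hT p hp N hN hNp k f
end

section
/- Let H be a real Hilbert space, T : H → H nonexpansive, (β_n), (λ_n) ⊂ (0,1], x₀ ∈ H, and let (x_n) be generated by the (T-KM) iteration. Let N ∈ ℕ∖{0} satisfy N ≥ max{‖x₀ − p‖, ‖p‖} for some p ∈ Fix T, let ℓ ∈ ℕ∖{0} and let b, D, B, L : ℕ → ℕ be monotone functions satisfying (Q2), (Q3), (Q4), (Q5), (Q6). Then for all k ∈ ℕ and all n ≥ ν₂(k) one has ‖T(x_n) − x_n‖ ≤ 1/(k+1), where ν₂(k) := max{b(4Nℓ(k+1)−1), ν₁(2ℓ(k+1)−1)}, with ν₁(k) := D(G(3k+2) + ⌈ln(6N(k+1))⌉) + 1 and G(k) := max{B(4N(k+1)−1), L(10N(k+1)−1)}. -/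
/-!
The iterates `x n` and the points `β n • x n` stay in the closed ball of radius `N` around `p`,
which contains `0` and is mapped into itself by `T`; hence every vector occurring below has norm
at most `2N`. This yields the recursive estimate
`‖x (n+2) - x (n+1)‖ ≤ β (n+1) ‖x (n+1) - x n‖ + 2N (|Δβ| + |Δλ|)`.
Unrolled from `m = G(3k+2)` on and combined with `∏ β i ≤ exp (-∑ (1 - β i))`, (Q3) makes the
product at most `1/(6N(k+1))` once `n ≥ ν₁(k)`, while (Q4) and (Q6) make the sums of the
increments small, so `‖x (n+1) - x n‖ ≤ 1/(k+1)`. Finally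
`λ n ‖T (x n) - x n‖ ≤ |1 - β n| ‖x n‖ + ‖x (n+1) - x n‖`, and (Q2), (Q5) conclude.
-/

/-- `G(k) := max{B(4N(k+1)−1), L(10N(k+1)−1)}`. -/
def Gfun (N : ℕ) (B L : ℕ → ℕ) (k : ℕ) : ℕ :=
  max (B (4 * N * (k + 1) - 1)) (L (10 * N * (k + 1) - 1))

/-- `ν₁(k) := D(G(3k+2) + ⌈ln(6N(k+1))⌉) + 1`. -/
noncomputable def nu1 (N : ℕ) (D B L : ℕ → ℕ) (k : ℕ) : ℕ :=
  D (Gfun N B L (3 * k + 2) + Nat.ceil (Real.log (6 * (N : ℝ) * (k + 1)))) + 1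


/-- `ν₂(k) := max{b(4Nℓ(k+1)−1), ν₁(2ℓ(k+1)−1)}`. -/
noncomputable def nu2 (N l : ℕ) (b D B L : ℕ → ℕ) (k : ℕ) : ℕ :=
  max (b (4 * N * l * (k + 1) - 1)) (nu1 N D B L (2 * l * (k + 1) - 1))

open Finset Metric

lemma natCast_sub_one_add_one {a : ℕ} (ha : 0 < a) : ((a - 1 : ℕ) : ℝ) + 1 = a := by
  rw [Nat.cast_pred ha, sub_add_cancel]

lemma le_prod_mul_add_sum_of_le_mul_add {a c e : ℕ → ℝ} (hc0 : ∀ i, 0 ≤ c i)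
    (hc1 : ∀ i, c i ≤ 1) (he : ∀ i, 0 ≤ e i)
    (hrec : ∀ i, a (i + 1) ≤ c (i + 1) * a i + e (i + 1)) {m n : ℕ} (hmn : m ≤ n) :
    a n ≤ (∏ i ∈ Ioc m n, c i) * a m + ∑ i ∈ Ioc m n, e i := by
  induction n, hmn using Nat.le_induction with
  | base => simp
  | succ n hmn ih =>
    have hS : 0 ≤ ∑ i ∈ Ioc m n, e i := sum_nonneg fun i _ => he i
    rw [prod_Ioc_succ_top hmn, sum_Ioc_succ_top hmn]
    calc a (n + 1) ≤ c (n + 1) * a n + e (n + 1) := hrec n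
      _ ≤ c (n + 1) * ((∏ i ∈ Ioc m n, c i) * a m + ∑ i ∈ Ioc m n, e i) + e (n + 1) := by
          gcongr; exact hc0 _
      _ ≤ _ := by nlinarith [mul_le_of_le_one_left hS (hc1 (n + 1))]

lemma prod_le_exp_neg_sum_one_sub {ι : Type*} (s : Finset ι) {c : ι → ℝ}
    (hc : ∀ i ∈ s, 0 ≤ c i) : ∏ i ∈ s, c i ≤ Real.exp (-∑ i ∈ s, (1 - c i)) := by
  rw [← sum_neg_distrib, Real.exp_sum]
  exact prod_le_prod hc fun i _ => by linarith [Real.add_one_le_exp (-(1 - c i))]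

lemma le_sum_Ioc_of_add_le_sum_Icc {f : ℕ → ℝ} (hf0 : ∀ i, 0 ≤ f i) (hf1 : ∀ i, f i ≤ 1)
    {m d n : ℕ} {c : ℝ} (h : m + c ≤ ∑ i ∈ Icc 1 d, f i) (hdn : d ≤ n) :
    c ≤ ∑ i ∈ Ioc m n, f i := by
  have hd : ∑ i ∈ Icc 1 d, f i ≤ ∑ i ∈ Ioc 0 n, f i :=
    sum_le_sum_of_subset_of_nonneg (fun i hi => by simp at hi ⊢; omega) fun i _ _ => hf0 i
  have hm : ∑ i ∈ Ioc 0 m, f i ≤ m := by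
    simpa using sum_le_card_nsmul (Ioc 0 m) f 1 fun i _ => hf1 i
  rcases le_total m n with hmn | hnm
  · linarith [sum_Ioc_consecutive f (Nat.zero_le m) hmn]
  · have hn : ∑ i ∈ Ioc 0 n, f i ≤ ∑ i ∈ Ioc 0 m, f i :=
      sum_le_sum_of_subset_of_nonneg (Ioc_subset_Ioc_right hnm) fun i _ _ => hf0 i
    rw [Ioc_eq_empty_of_le hnm, sum_empty]
    linarith

lemma sum_Ioc_le_of_forall_sum_Icc_le {f : ℕ → ℝ} (hf : ∀ i, 0 ≤ f i) {B m : ℕ} {ε : ℝ}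
    (h : ∀ n, ∑ i ∈ Icc (B + 1) (B + n), f i ≤ ε) (hBm : B ≤ m) (n : ℕ) :
    ∑ i ∈ Ioc m n, f i ≤ ε :=
  (sum_le_sum_of_subset_of_nonneg (fun i hi => by simp at hi ⊢; omega)
    fun i _ _ => hf i).trans (h (n - B))

section Iteration

variable {E : Type*} [NormedAddCommGroup E]

lemma norm_sub_le_two_mul_of_mem_closedBall {a b p : E} {r : ℝ} (ha : a ∈ closedBall p r)
    (hb : b ∈ closedBall p r) : ‖a - b‖ ≤ 2 * r := by
  rw [← dist_eq_norm]
  linarith [dist_triangle_right a b p, mem_closedBall.1 ha, mem_closedBall.1 hb]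

lemma zero_mem_closedBall_of_norm_le {p : E} {r : ℝ} (hp : ‖p‖ ≤ r) : 0 ∈ closedBall p r := by
  rwa [mem_closedBall, dist_zero_left]

lemma apply_mem_closedBall_of_isFixedPt {T : E → E} (hT : ∀ a b, ‖T a - T b‖ ≤ ‖a - b‖)
    {p y : E} (hp : T p = p) {r : ℝ} (hy : y ∈ closedBall p r) : T y ∈ closedBall p r := by
  rw [mem_closedBall_iff_norm] at hy ⊢
  calc ‖T y - p‖ = ‖T y - T p‖ := by rw [hp]
    _ ≤ r := (hT _ _).trans hy

variable [NormedSpace ℝ E]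

lemma norm_one_sub_smul_add_smul_le {a b : E} {t : ℝ} (ht : t ∈ Set.Icc 0 1)
    (hab : ‖b‖ ≤ ‖a‖) : ‖(1 - t) • a + t • b‖ ≤ ‖a‖ := by
  have hmem := convex_closedBall (0 : E) ‖a‖ (mem_closedBall_zero_iff.2 le_rfl)
    (mem_closedBall_zero_iff.2 hab) (sub_nonneg.2 ht.2) ht.1 (sub_add_cancel 1 t)
  exact mem_closedBall_zero_iff.1 hmem

variable {T : E → E} {β lam : ℕ → ℝ} {x : ℕ → E}

lemma tkm_mem_closedBall (hT : ∀ a b, ‖T a - T b‖ ≤ ‖a - b‖) {p : E} (hp : T p = p)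
    (hβ : ∀ n, β n ∈ Set.Icc 0 1) (hlam : ∀ n, lam n ∈ Set.Icc 0 1)
    (hx : ∀ n, x (n + 1) = β n • x n + lam n • (T (β n • x n) - β n • x n))
    {r : ℝ} (hx0 : ‖x 0 - p‖ ≤ r) (hpr : ‖p‖ ≤ r) (n : ℕ) :
    x n ∈ closedBall p r ∧ β n • x n ∈ closedBall p r := by
  have hu {y : E} (hy : y ∈ closedBall p r) (n : ℕ) : β n • y ∈ closedBall p r :=
    (convex_closedBall p r).smul_mem_of_zero_mem (zero_mem_closedBall_of_norm_le hpr) hy (hβ n)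
  induction n with
  | zero => exact ⟨mem_closedBall_iff_norm.2 hx0, hu (mem_closedBall_iff_norm.2 hx0) 0⟩
  | succ n ih =>
    have hxn : x (n + 1) ∈ closedBall p r := by
      rw [hx n]
      exact (convex_closedBall p r).add_smul_sub_mem ih.2
        (apply_mem_closedBall_of_isFixedPt hT hp ih.2) (hlam n)
    exact ⟨hxn, hu hxn (n + 1)⟩

lemma tkm_norm_sub_succ_succ_le (hT : ∀ a b, ‖T a - T b‖ ≤ ‖a - b‖)
    (hx : ∀ n, x (n + 1) = β n • x n + lam n • (T (β n • x n) - β n • x n))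
    {n : ℕ} (hβ : 0 ≤ β (n + 1)) (hlam : lam (n + 1) ∈ Set.Icc 0 1) {M : ℝ}
    (hxM : ‖x n‖ ≤ M) (hTM : ‖T (β n • x n) - β n • x n‖ ≤ M) :
    ‖x (n + 2) - x (n + 1)‖ ≤
      β (n + 1) * ‖x (n + 1) - x n‖ + M * (|β (n + 1) - β n| + |lam (n + 1) - lam n|) := by
  set u := β n • x n
  set u' := β (n + 1) • x (n + 1)
  have hu : ‖u' - u‖ ≤ β (n + 1) * ‖x (n + 1) - x n‖ + |β (n + 1) - β n| * M :=
    calc ‖u' - u‖ = ‖β (n + 1) • (x (n + 1) - x n) + (β (n + 1) - β n) • x n‖ := by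
          congr 1; module
      _ ≤ β (n + 1) * ‖x (n + 1) - x n‖ + |β (n + 1) - β n| * ‖x n‖ := by
          refine (norm_add_le _ _).trans_eq ?_
          rw [norm_smul, norm_smul, Real.norm_of_nonneg hβ, Real.norm_eq_abs]
      _ ≤ _ := by gcongr
  have hkm : ‖(1 - lam (n + 1)) • (u' - u) + lam (n + 1) • (T u' - T u)‖ ≤ ‖u' - u‖ :=
    norm_one_sub_smul_add_smul_le hlam (hT _ _)
  calc ‖x (n + 2) - x (n + 1)‖
      = ‖((1 - lam (n + 1)) • (u' - u) + lam (n + 1) • (T u' - T u))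
          + (lam (n + 1) - lam n) • (T u - u)‖ := by
        rw [show x (n + 2) = u' + lam (n + 1) • (T u' - u') from hx (n + 1), hx n]
        congr 1; module
    _ ≤ ‖u' - u‖ + |lam (n + 1) - lam n| * M := by
        refine (norm_add_le _ _).trans (add_le_add hkm ?_)
        rw [norm_smul, Real.norm_eq_abs]
        gcongr
    _ ≤ _ := by linarith

lemma tkm_norm_sub_succ_le_exp (hT : ∀ a b, ‖T a - T b‖ ≤ ‖a - b‖) {p : E} (hp : T p = p)
    (hβ : ∀ n, β n ∈ Set.Icc 0 1) (hlam : ∀ n, lam n ∈ Set.Icc 0 1)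
    (hx : ∀ n, x (n + 1) = β n • x n + lam n • (T (β n • x n) - β n • x n))
    {r : ℝ} (hx0 : ‖x 0 - p‖ ≤ r) (hpr : ‖p‖ ≤ r) {m n : ℕ} (hmn : m ≤ n) :
    ‖x (n + 1) - x n‖ ≤ 2 * r * Real.exp (-∑ i ∈ Ioc m n, (1 - β i))
      + 2 * r * (∑ i ∈ Ioc m n, |β i - β (i - 1)| + ∑ i ∈ Ioc m n, |lam i - lam (i - 1)|) := by
  have hball := tkm_mem_closedBall hT hp hβ hlam hx hx0 hpr
  have hr : 0 ≤ r := (norm_nonneg p).trans hpr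
  have hxr (i : ℕ) : ‖x i‖ ≤ 2 * r := by
    simpa using norm_sub_le_two_mul_of_mem_closedBall (hball i).1
      (zero_mem_closedBall_of_norm_le hpr)
  have hTr (i : ℕ) : ‖T (β i • x i) - β i • x i‖ ≤ 2 * r :=
    norm_sub_le_two_mul_of_mem_closedBall
      (apply_mem_closedBall_of_isFixedPt hT hp (hball i).2) (hball i).2
  have hunfold := le_prod_mul_add_sum_of_le_mul_add (a := fun i => ‖x (i + 1) - x i‖)
    (e := fun i => 2 * r * (|β i - β (i - 1)| + |lam i - lam (i - 1)|))
    (fun i => (hβ i).1) (fun i => (hβ i).2) (fun i => by positivity)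
    (fun i => by simpa using
      tkm_norm_sub_succ_succ_le hT hx (hβ (i + 1)).1 (hlam (i + 1)) (hxr i) (hTr i)) hmn
  have hprod := prod_le_exp_neg_sum_one_sub (Ioc m n) fun i _ => (hβ i).1
  calc ‖x (n + 1) - x n‖
      ≤ (∏ i ∈ Ioc m n, β i) * ‖x (m + 1) - x m‖
        + ∑ i ∈ Ioc m n, 2 * r * (|β i - β (i - 1)| + |lam i - lam (i - 1)|) := hunfold
    _ ≤ Real.exp (-∑ i ∈ Ioc m n, (1 - β i)) * (2 * r)
        + ∑ i ∈ Ioc m n, 2 * r * (|β i - β (i - 1)| + |lam i - lam (i - 1)|) := by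
        gcongr
        exact norm_sub_le_two_mul_of_mem_closedBall (hball (m + 1)).1 (hball m).1
    _ = _ := by rw [← mul_sum, sum_add_distrib]; ring

lemma tkm_norm_sub_succ_le_of_nu1_le (hT : ∀ a b, ‖T a - T b‖ ≤ ‖a - b‖) {p : E} (hp : T p = p)
    (hβ : ∀ n, β n ∈ Set.Icc 0 1) (hlam : ∀ n, lam n ∈ Set.Icc 0 1)
    (hx : ∀ n, x (n + 1) = β n • x n + lam n • (T (β n • x n) - β n • x n))
    {N : ℕ} (hN : 0 < N) (hx0 : ‖x 0 - p‖ ≤ N) (hpN : ‖p‖ ≤ N) {D B L : ℕ → ℕ}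
    (hQ3 : ∀ k : ℕ, (k : ℝ) ≤ ∑ i ∈ Icc 1 (D k), (1 - β i))
    (hQ4 : ∀ k n : ℕ, ∑ i ∈ Icc (B k + 1) (B k + n), |β i - β (i - 1)| ≤ 1 / (k + 1))
    (hQ6 : ∀ k n : ℕ, ∑ i ∈ Icc (L k + 1) (L k + n), |lam i - lam (i - 1)| ≤ 1 / (k + 1))
    {k n : ℕ} (hn : nu1 N D B L k ≤ n) : ‖x (n + 1) - x n‖ ≤ 1 / (k + 1) := by
  set m := Gfun N B L (3 * k + 2)
  set c := ⌈Real.log (6 * N * (k + 1))⌉₊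
  have hN' : (1 : ℝ) ≤ N := by exact_mod_cast hN
  have hlog_pos : 0 < Real.log (6 * N * (k + 1)) :=
    Real.log_pos (by nlinarith [(k.cast_nonneg : (0 : ℝ) ≤ k)])
  have hlog : Real.log (6 * N * (k + 1)) ≤ ∑ i ∈ Ioc m n, (1 - β i) :=
    (Nat.le_ceil _).trans <| le_sum_Ioc_of_add_le_sum_Icc (fun i => sub_nonneg.2 (hβ i).2)
      (fun i => by linarith [(hβ i).1]) (m := m) (c := c) (d := D (m + c))
      (by rw [← Nat.cast_add]; exact hQ3 (m + c)) (Nat.le_of_succ_le hn)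
  have hmn : m ≤ n := by
    obtain ⟨i, hi⟩ := nonempty_of_sum_ne_zero (hlog_pos.trans_le hlog).ne'
    exact ((mem_Ioc.1 hi).1.trans_le (mem_Ioc.1 hi).2).le
  have hexp : Real.exp (-∑ i ∈ Ioc m n, (1 - β i)) ≤ 1 / (6 * N * (k + 1)) := by
    rw [one_div, ← Real.exp_log (by positivity : (0 : ℝ) < 6 * N * (k + 1)), ← Real.exp_neg]
    exact Real.exp_le_exp.2 (neg_le_neg hlog)
  have hβsum : ∑ i ∈ Ioc m n, |β i - β (i - 1)| ≤ 1 / (12 * N * (k + 1)) := by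
    refine (sum_Ioc_le_of_forall_sum_Icc_le (fun i => abs_nonneg _) (hQ4 _) (le_max_left _ _)
      n).trans_eq ?_
    rw [natCast_sub_one_add_one (by positivity)]
    push_cast; ring
  have hlamsum : ∑ i ∈ Ioc m n, |lam i - lam (i - 1)| ≤ 1 / (30 * N * (k + 1)) := by
    refine (sum_Ioc_le_of_forall_sum_Icc_le (fun i => abs_nonneg _) (hQ6 _) (le_max_right _ _)
      n).trans_eq ?_
    rw [natCast_sub_one_add_one (by positivity)]
    push_cast; ring
  calc ‖x (n + 1) - x n‖
      ≤ 2 * N * Real.exp (-∑ i ∈ Ioc m n, (1 - β i))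
        + 2 * N * (∑ i ∈ Ioc m n, |β i - β (i - 1)| + ∑ i ∈ Ioc m n, |lam i - lam (i - 1)|) :=
        tkm_norm_sub_succ_le_exp hT hp hβ hlam hx hx0 hpN hmn
    _ ≤ 2 * N * (1 / (6 * N * (k + 1)))
        + 2 * N * (1 / (12 * N * (k + 1)) + 1 / (30 * N * (k + 1))) := by gcongr
    _ = 17 / 30 * (1 / (k + 1)) := by field_simp; ring
    _ ≤ 1 / (k + 1) := by linarith [(by positivity : (0 : ℝ) ≤ 1 / (k + 1))]

lemma mul_norm_apply_sub_self_le_tkm_step (hT : ∀ a b, ‖T a - T b‖ ≤ ‖a - b‖) (y : E)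
    {b t : ℝ} (ht : t ∈ Set.Icc 0 1) :
    t * ‖T y - y‖ ≤ |1 - b| * ‖y‖ + ‖b • y + t • (T (b • y) - b • y) - y‖ := by
  set u := b • y
  have hyu : ‖y - u‖ = |1 - b| * ‖y‖ := by
    rw [← Real.norm_eq_abs, ← norm_smul]; congr 1; module
  calc t * ‖T y - y‖
      = ‖t • (T y - T u) + (u + t • (T u - u) - y) + (1 - t) • (y - u)‖ := by
        rw [← norm_smul_of_nonneg ht.1]; congr 1; module
    _ ≤ t * ‖T y - T u‖ + ‖u + t • (T u - u) - y‖ + (1 - t) * ‖y - u‖ := by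
        refine norm_add₃_le.trans_eq ?_
        rw [norm_smul_of_nonneg ht.1, norm_smul_of_nonneg (sub_nonneg.2 ht.2)]
    _ ≤ t * ‖y - u‖ + ‖u + t • (T u - u) - y‖ + (1 - t) * ‖y - u‖ := by
        gcongr
        · exact ht.1
        · exact hT _ _
    _ = _ := by rw [hyu]; ring

end Iteration

theorem tkm_asymptotic_regularity_general
    {H : Type*} [NormedAddCommGroup H] [InnerProductSpace ℝ H]
    (T : H → H) (hT : ∀ a b : H, ‖T a - T b‖ ≤ ‖a - b‖)
    (β lam : ℕ → ℝ)
    (hβ : ∀ n, β n ∈ Set.Ioc (0 : ℝ) 1)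
    (hlam : ∀ n, lam n ∈ Set.Ioc (0 : ℝ) 1)
    (x : ℕ → H)
    (hx : ∀ n, x (n + 1) = β n • x n + lam n • (T (β n • x n) - β n • x n))
    (N : ℕ) (hN : 0 < N)
    (p : H) (hp : T p = p)
    (hNp : max ‖x 0 - p‖ ‖p‖ ≤ (N : ℝ))
    (l : ℕ) (hl : 0 < l)
    (b D B L : ℕ → ℕ)
    (hQ2 : ∀ k n : ℕ, b k ≤ n → |1 - β n| ≤ 1 / (k + 1))
    (hQ5 : ∀ n : ℕ, 1 / (l : ℝ) ≤ lam n)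
    (hQ3 : ∀ k : ℕ, (k : ℝ) ≤ ∑ i ∈ Finset.Icc 1 (D k), (1 - β i))
    (hQ4 : ∀ k n : ℕ, ∑ i ∈ Finset.Icc (B k + 1) (B k + n), |β i - β (i - 1)| ≤ 1 / (k + 1))
    (hQ6 : ∀ k n : ℕ, ∑ i ∈ Finset.Icc (L k + 1) (L k + n), |lam i - lam (i - 1)| ≤ 1 / (k + 1)) :
    ∀ k n : ℕ, nu2 N l b D B L k ≤ n → ‖T (x n) - x n‖ ≤ 1 / (k + 1) := by
  intro k n hn
  have hβ' n : β n ∈ Set.Icc 0 1 := Set.Ioc_subset_Icc_self (hβ n)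
  have hlam' n : lam n ∈ Set.Icc 0 1 := Set.Ioc_subset_Icc_self (hlam n)
  have hx0 : ‖x 0 - p‖ ≤ N := (le_max_left _ _).trans hNp
  have hpN : ‖p‖ ≤ N := (le_max_right _ _).trans hNp
  have hxn : ‖x n‖ ≤ 2 * N := by
    simpa using norm_sub_le_two_mul_of_mem_closedBall
      (tkm_mem_closedBall hT hp hβ' hlam' hx hx0 hpN n).1 (zero_mem_closedBall_of_norm_le hpN)
  have hβn : |1 - β n| ≤ 1 / (4 * N * l * (k + 1)) := by
    have := hQ2 _ n ((le_max_left _ _).trans hn)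
    rw [natCast_sub_one_add_one (by positivity)] at this
    exact_mod_cast this
  have hstep : ‖x (n + 1) - x n‖ ≤ 1 / (2 * l * (k + 1)) := by
    have := tkm_norm_sub_succ_le_of_nu1_le hT hp hβ' hlam' hx hN hx0 hpN hQ3 hQ4 hQ6
      ((le_max_right _ _).trans hn)
    rw [natCast_sub_one_add_one (by positivity)] at this
    exact_mod_cast this
  have hl' : (0 : ℝ) < l := by exact_mod_cast hl
  have hlaml : 1 ≤ l * lam n := (div_le_iff₀' hl').1 (hQ5 n)
  calc ‖T (x n) - x n‖ ≤ l * (lam n * ‖T (x n) - x n‖) := by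
        rw [← mul_assoc]; exact le_mul_of_one_le_left (norm_nonneg _) hlaml
    _ ≤ l * (|1 - β n| * ‖x n‖ + ‖x (n + 1) - x n‖) := by
        rw [hx n]; gcongr; exact mul_norm_apply_sub_self_le_tkm_step hT (x n) (hlam' n)
    _ ≤ l * (1 / (4 * N * l * (k + 1)) * (2 * N) + 1 / (2 * l * (k + 1))) := by gcongr
    _ = 1 / (k + 1) := by field_simp; ring

/-- rate of asymptotic regularity `‖T(x_n) − x_n‖ → 0`
for the T-KM iteration. -/
theorem tkm_asymptotic_regularity
    {H : Type*} [NormedAddCommGroup H] [InnerProductSpace ℝ H] [CompleteSpace H]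
    (T : H → H) (hT : ∀ a b : H, ‖T a - T b‖ ≤ ‖a - b‖)
    (β lam : ℕ → ℝ)
    (hβ : ∀ n, β n ∈ Set.Ioc (0 : ℝ) 1)
    (hlam : ∀ n, lam n ∈ Set.Ioc (0 : ℝ) 1)
    (x : ℕ → H)
    (hx : ∀ n, x (n + 1) = β n • x n + lam n • (T (β n • x n) - β n • x n))
    (N : ℕ) (hN : 0 < N)
    (p : H) (hp : T p = p)
    (hNp : max ‖x 0 - p‖ ‖p‖ ≤ (N : ℝ))
    (l : ℕ) (hl : 0 < l)
    (b D B L : ℕ → ℕ)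
    (hbmono : Monotone b) (hDmono : Monotone D) (hBmono : Monotone B) (hLmono : Monotone L)
    (hQ2 : ∀ k n : ℕ, b k ≤ n → |1 - β n| ≤ 1 / (k + 1))
    (hQ5 : ∀ n : ℕ, 1 / (l : ℝ) ≤ lam n)
    (hQ3 : ∀ k : ℕ, (k : ℝ) ≤ ∑ i ∈ Finset.Icc 1 (D k), (1 - β i))
    (hQ4 : ∀ k n : ℕ, ∑ i ∈ Finset.Icc (B k + 1) (B k + n), |β i - β (i - 1)| ≤ 1 / (k + 1))
    (hQ6 : ∀ k n : ℕ, ∑ i ∈ Finset.Icc (L k + 1) (L k + n), |lam i - lam (i - 1)| ≤ 1 / (k + 1)) :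
    ∀ k n : ℕ, nu2 N l b D B L k ≤ n → ‖T (x n) - x n‖ ≤ 1 / (k + 1) :=
  tkm_asymptotic_regularity_general T hT β lam hβ hlam x hx N hN p hp hNp l hl b D B L hQ2 hQ5 hQ3
    hQ4 hQ6
end

section
/- Let H be a real Hilbert space, T : H → H nonexpansive, (β_n), (λ_n) ⊂ (0,1], x₀ ∈ H, and let (x_n) be generated by the (T-KM) iteration. If N ∈ ℕ∖{0} satisfies N ≥ max{‖x₀ − p‖, ‖p‖} for some p ∈ Fix T, then for all n ≥ 1: ‖x_{n+1} − x_n‖ ≤ β_n ‖x_n − x_{n−1}‖ + 2N|β_n − β_{n−1}| + 5N|λ_n − λ_{n−1}|. -/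
/-- recurrence inequality for consecutive T-KM iterates. -/
theorem tkm_consecutive_recurrence
    {H : Type*} [NormedAddCommGroup H] [InnerProductSpace ℝ H] [CompleteSpace H]
    (T : H → H) (hT : ∀ a b : H, ‖T a - T b‖ ≤ ‖a - b‖)
    (β lam : ℕ → ℝ)
    (hβ : ∀ n, β n ∈ Set.Ioc (0 : ℝ) 1)
    (hlam : ∀ n, lam n ∈ Set.Ioc (0 : ℝ) 1)
    (x : ℕ → H)
    (hx : ∀ n, x (n + 1) = β n • x n + lam n • (T (β n • x n) - β n • x n))
    (N : ℕ) (hN : 0 < N)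
    (p : H) (hp : T p = p)
    (hNp : max ‖x 0 - p‖ ‖p‖ ≤ (N : ℝ)) :
    ∀ n, 1 ≤ n →
      ‖x (n + 1) - x n‖ ≤
        β n * ‖x n - x (n - 1)‖ + 2 * N * |β n - β (n - 1)|
          + 5 * N * |lam n - lam (n - 1)| := by
  have hN0 : (0:ℝ) ≤ N := Nat.cast_nonneg N
  have hpN : ‖p‖ ≤ N := le_trans (le_max_right _ _) hNp
  -- step 1: ‖β n • x n - p‖ ≤ N given ‖x n - p‖ ≤ N
  have hyb : ∀ n, ‖x n - p‖ ≤ N → ‖β n • x n - p‖ ≤ N := by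
    intro n hxn
    have hβn := hβ n
    have h1 : β n • x n - p = β n • (x n - p) + (1 - β n) • (-p) := by
      match_scalars <;> ring
    calc ‖β n • x n - p‖ = ‖β n • (x n - p) + (1 - β n) • (-p)‖ := by rw [h1]
      _ ≤ ‖β n • (x n - p)‖ + ‖(1 - β n) • (-p)‖ := norm_add_le _ _
      _ = β n * ‖x n - p‖ + (1 - β n) * ‖p‖ := by
          rw [norm_smul, norm_smul, Real.norm_of_nonneg hβn.1.le,
            Real.norm_of_nonneg (by linarith [hβn.2]), norm_neg]
      _ ≤ β n * N + (1 - β n) * N := by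
          have h2 : (0:ℝ) ≤ 1 - β n := by linarith [hβn.2]
          exact add_le_add (mul_le_mul_of_nonneg_left hxn hβn.1.le)
            (mul_le_mul_of_nonneg_left hpN h2)
      _ = N := by ring
  -- step 2: ‖x n - p‖ ≤ N for all n
  have hxp : ∀ n, ‖x n - p‖ ≤ N := by
    intro n
    induction n with
    | zero => exact le_trans (le_max_left _ _) hNp
    | succ n ih =>
      have hLn := hlam n
      have hy : ‖β n • x n - p‖ ≤ N := hyb n ih
      have hTy : ‖T (β n • x n) - p‖ ≤ N := by
        have := hT (β n • x n) p
        rw [hp] at this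
        exact this.trans hy
      have h2 : x (n+1) - p
          = (1 - lam n) • (β n • x n - p) + lam n • (T (β n • x n) - p) := by
        rw [hx n]; match_scalars <;> ring
      calc ‖x (n+1) - p‖
          = ‖(1 - lam n) • (β n • x n - p) + lam n • (T (β n • x n) - p)‖ := by rw [h2]
        _ ≤ ‖(1 - lam n) • (β n • x n - p)‖ + ‖lam n • (T (β n • x n) - p)‖ :=
            norm_add_le _ _
        _ = (1 - lam n) * ‖β n • x n - p‖ + lam n * ‖T (β n • x n) - p‖ := by
            rw [norm_smul, norm_smul, Real.norm_of_nonneg (by linarith [hLn.2]),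
              Real.norm_of_nonneg hLn.1.le]
        _ ≤ (1 - lam n) * N + lam n * N := by
            exact add_le_add (mul_le_mul_of_nonneg_left hy (by linarith [hLn.2]))
              (mul_le_mul_of_nonneg_left hTy hLn.1.le)
        _ = N := by ring
  -- auxiliary bounds
  have hxN : ∀ n, ‖x n‖ ≤ 2 * N := by
    intro n
    calc ‖x n‖ = ‖(x n - p) + p‖ := by rw [sub_add_cancel]
      _ ≤ ‖x n - p‖ + ‖p‖ := norm_add_le _ _
      _ ≤ N + N := add_le_add (hxp n) hpN
      _ = 2 * N := by ring
  have hTyb : ∀ n, ‖T (β n • x n) - β n • x n‖ ≤ 2 * N := by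
    intro n
    have hy := hyb n (hxp n)
    have hTy : ‖T (β n • x n) - p‖ ≤ N := by
      have := hT (β n • x n) p
      rw [hp] at this
      exact this.trans hy
    calc ‖T (β n • x n) - β n • x n‖
        = ‖(T (β n • x n) - p) + (p - β n • x n)‖ := by rw [sub_add_sub_cancel]
      _ ≤ ‖T (β n • x n) - p‖ + ‖p - β n • x n‖ := norm_add_le _ _
      _ ≤ N + N := add_le_add hTy (by rw [norm_sub_rev]; exact hy)
      _ = 2 * N := by ring
  -- main argument
  intro n hn
  obtain ⟨m, rfl⟩ : ∃ m, n = m + 1 := ⟨n - 1, (Nat.succ_pred_eq_of_pos hn).symm⟩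
  simp only [Nat.add_sub_cancel]
  set n := m + 1 with hn'
  have hβn := hβ n
  have hLn := hlam n
  -- difference of β-scaled iterates
  have hy : ‖β n • x n - β m • x m‖ ≤ β n * ‖x n - x m‖ + 2 * N * |β n - β m| := by
    have h1 : β n • x n - β m • x m = β n • (x n - x m) + (β n - β m) • x m := by
      match_scalars <;> ring
    calc ‖β n • x n - β m • x m‖
        = ‖β n • (x n - x m) + (β n - β m) • x m‖ := by rw [h1]
      _ ≤ ‖β n • (x n - x m)‖ + ‖(β n - β m) • x m‖ := norm_add_le _ _
      _ = β n * ‖x n - x m‖ + |β n - β m| * ‖x m‖ := by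
          rw [norm_smul, norm_smul, Real.norm_of_nonneg hβn.1.le, Real.norm_eq_abs]
      _ ≤ β n * ‖x n - x m‖ + |β n - β m| * (2 * N) := by
          exact add_le_add le_rfl (mul_le_mul_of_nonneg_left (hxN m) (abs_nonneg _))
      _ = β n * ‖x n - x m‖ + 2 * N * |β n - β m| := by ring
  -- decomposition of x (n+1) - x n
  have hdec : x (n + 1) - x n
      = (1 - lam n) • (β n • x n - β m • x m)
        + lam n • (T (β n • x n) - T (β m • x m))
        + (lam n - lam m) • (T (β m • x m) - β m • x m) := by
    rw [hx n, hx m]; match_scalars <;> ring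
  calc ‖x (n + 1) - x n‖
      = ‖(1 - lam n) • (β n • x n - β m • x m)
        + lam n • (T (β n • x n) - T (β m • x m))
        + (lam n - lam m) • (T (β m • x m) - β m • x m)‖ := by rw [hdec]
    _ ≤ ‖(1 - lam n) • (β n • x n - β m • x m)
        + lam n • (T (β n • x n) - T (β m • x m))‖
        + ‖(lam n - lam m) • (T (β m • x m) - β m • x m)‖ := norm_add_le _ _
    _ ≤ ‖(1 - lam n) • (β n • x n - β m • x m)‖
        + ‖lam n • (T (β n • x n) - T (β m • x m))‖
        + ‖(lam n - lam m) • (T (β m • x m) - β m • x m)‖ := by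
        exact add_le_add (norm_add_le _ _) le_rfl
    _ = (1 - lam n) * ‖β n • x n - β m • x m‖
        + lam n * ‖T (β n • x n) - T (β m • x m)‖
        + |lam n - lam m| * ‖T (β m • x m) - β m • x m‖ := by
        rw [norm_smul, norm_smul, norm_smul, Real.norm_of_nonneg (by linarith [hLn.2]),
          Real.norm_of_nonneg hLn.1.le, Real.norm_eq_abs]
    _ ≤ (1 - lam n) * ‖β n • x n - β m • x m‖
        + lam n * ‖β n • x n - β m • x m‖
        + |lam n - lam m| * (2 * N) := by
        exact add_le_add (add_le_add le_rfl
          (mul_le_mul_of_nonneg_left (hT _ _) hLn.1.le))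
          (mul_le_mul_of_nonneg_left (hTyb m) (abs_nonneg _))
    _ = ‖β n • x n - β m • x m‖ + 2 * N * |lam n - lam m| := by ring
    _ ≤ (β n * ‖x n - x m‖ + 2 * N * |β n - β m|) + 2 * N * |lam n - lam m| :=
        add_le_add hy le_rfl
    _ ≤ β n * ‖x n - x m‖ + 2 * N * |β n - β m| + 5 * N * |lam n - lam m| := by
        have : (0:ℝ) ≤ N * |lam n - lam m| := mul_nonneg hN0 (abs_nonneg _)
        nlinarith [abs_nonneg (lam n - lam m)]
end

section
/- Let H be a real Hilbert space, T : H → H nonexpansive, (β_n), (λ_n) ⊂ (0,1], x₀ ∈ H, and let (x_n) be generated by the (T-KM) iteration. If N ∈ ℕ∖{0} satisfies N ≥ max{‖x₀ − p‖, ‖p‖} for some p ∈ Fix T, then for all n ∈ ℕ: λ_n ‖x_n − T(x_n)‖ ≤ ‖x_{n+1} − x_n‖ + 2N(1 − β_n). -/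
/-- residual bound for the T-KM iteration. -/
theorem tkm_residual_bound
    {H : Type*} [NormedAddCommGroup H] [InnerProductSpace ℝ H] [CompleteSpace H]
    (T : H → H) (hT : ∀ a b : H, ‖T a - T b‖ ≤ ‖a - b‖)
    (β lam : ℕ → ℝ)
    (hβ : ∀ n, β n ∈ Set.Ioc (0 : ℝ) 1)
    (hlam : ∀ n, lam n ∈ Set.Ioc (0 : ℝ) 1)
    (x : ℕ → H)
    (hx : ∀ n, x (n + 1) = β n • x n + lam n • (T (β n • x n) - β n • x n))
    (N : ℕ) (hN : 0 < N)
    (p : H) (hp : T p = p)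
    (hNp : max ‖x 0 - p‖ ‖p‖ ≤ (N : ℝ)) :
    ∀ n, lam n * ‖x n - T (x n)‖ ≤ ‖x (n + 1) - x n‖ + 2 * N * (1 - β n) := by
  -- First: boundedness.  max ‖x n - p‖ ‖p‖ ≤ N for all n.
  have hbound : ∀ n, max ‖x n - p‖ ‖p‖ ≤ (N : ℝ) := by
    intro n
    induction n with
    | zero => exact hNp
    | succ n ih =>
      have hβn := hβ n
      have hln := hlam n
      have step : ‖x (n + 1) - p‖ ≤ max ‖x n - p‖ ‖p‖ := by
        have h1 : x (n + 1) - p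
            = (1 - lam n) • (β n • x n - p) + lam n • (T (β n • x n) - T p) := by
          rw [hx n, hp]; module
        have h2 : ‖x (n + 1) - p‖ ≤ (1 - lam n) * ‖β n • x n - p‖
            + lam n * ‖T (β n • x n) - T p‖ := by
          rw [h1]
          calc _ ≤ ‖(1 - lam n) • (β n • x n - p)‖ + ‖lam n • (T (β n • x n) - T p)‖ :=
                norm_add_le _ _
            _ = (1 - lam n) * ‖β n • x n - p‖ + lam n * ‖T (β n • x n) - T p‖ := by
                rw [norm_smul, norm_smul, Real.norm_eq_abs, Real.norm_eq_abs,
                  abs_of_nonneg (by linarith [hln.2]), abs_of_nonneg (le_of_lt hln.1)]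
        have h3 : ‖T (β n • x n) - T p‖ ≤ ‖β n • x n - p‖ := hT _ _
        have h4 : ‖β n • x n - p‖ ≤ max ‖x n - p‖ ‖p‖ := by
          have e : β n • x n - p = β n • (x n - p) + (β n - 1) • p := by module
          calc ‖β n • x n - p‖ ≤ ‖β n • (x n - p)‖ + ‖(β n - 1) • p‖ := by
                rw [e]; exact norm_add_le _ _
            _ = β n * ‖x n - p‖ + (1 - β n) * ‖p‖ := by
                rw [norm_smul, norm_smul, Real.norm_eq_abs, Real.norm_eq_abs,
                  abs_of_nonneg (le_of_lt hβn.1), abs_of_nonpos (by linarith [hβn.2])]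
                ring
            _ ≤ max ‖x n - p‖ ‖p‖ := by
                nlinarith [le_max_left ‖x n - p‖ ‖p‖, le_max_right ‖x n - p‖ ‖p‖,
                  hβn.1, hβn.2, norm_nonneg p, norm_nonneg (x n - p)]
        nlinarith [hln.1, hln.2]
      exact max_le (step.trans ih) ((le_max_right _ _).trans ih)
  intro n
  have hβn := hβ n
  have hln := hlam n
  have hxn : ‖x n‖ ≤ 2 * N := by
    have := hbound n
    have h1 : ‖x n - p‖ ≤ (N : ℝ) := (le_max_left _ _).trans this
    have h2 : ‖p‖ ≤ (N : ℝ) := (le_max_right _ _).trans this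
    calc ‖x n‖ = ‖(x n - p) + p‖ := by rw [sub_add_cancel]
      _ ≤ ‖x n - p‖ + ‖p‖ := norm_add_le _ _
      _ ≤ 2 * N := by linarith
  have key : lam n • (x n - T (x n))
      = (x n - x (n + 1)) - ((1 - β n) * (1 - lam n)) • x n
        - lam n • (T (x n) - T (β n • x n)) := by
    rw [hx n]; module
  have hT2 : ‖T (x n) - T (β n • x n)‖ ≤ (1 - β n) * ‖x n‖ := by
    calc ‖T (x n) - T (β n • x n)‖ ≤ ‖x n - β n • x n‖ := hT _ _
      _ = (1 - β n) * ‖x n‖ := by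
          rw [show x n - β n • x n = (1 - β n) • x n by module, norm_smul,
            Real.norm_eq_abs, abs_of_nonneg (by linarith [hβn.2])]
  have hmain : lam n * ‖x n - T (x n)‖
      ≤ ‖x (n + 1) - x n‖ + (1 - β n) * ‖x n‖ := by
    have e1 : lam n * ‖x n - T (x n)‖ = ‖lam n • (x n - T (x n))‖ := by
      rw [norm_smul, Real.norm_eq_abs, abs_of_nonneg (le_of_lt hln.1)]
    rw [e1, key]
    calc ‖(x n - x (n + 1)) - ((1 - β n) * (1 - lam n)) • x n
          - lam n • (T (x n) - T (β n • x n))‖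
        ≤ ‖x n - x (n + 1)‖ + ‖((1 - β n) * (1 - lam n)) • x n‖
          + ‖lam n • (T (x n) - T (β n • x n))‖ := by
          exact (norm_sub_le _ _).trans (by gcongr; exact norm_sub_le _ _)
      _ = ‖x n - x (n + 1)‖ + ((1 - β n) * (1 - lam n)) * ‖x n‖
          + lam n * ‖T (x n) - T (β n • x n)‖ := by
          rw [norm_smul, norm_smul, Real.norm_eq_abs, Real.norm_eq_abs,
            abs_of_nonneg (mul_nonneg (by linarith [hβn.2]) (by linarith [hln.2])),
            abs_of_nonneg (le_of_lt hln.1)]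
      _ ≤ ‖x (n + 1) - x n‖ + (1 - β n) * ‖x n‖ := by
          rw [norm_sub_rev]
          nlinarith [hT2, hln.1, hln.2, hβn.2, norm_nonneg (x n)]
  have : (1 - β n) * ‖x n‖ ≤ 2 * N * (1 - β n) := by
    nlinarith [hβn.2, hxn, norm_nonneg (x n)]
  linarith
end

section
/- Let H be a real Hilbert space, T : H → H nonexpansive, (β_n), (λ_n) ⊂ (0,1], x₀ ∈ H, and let (x_n) be generated by the (T-KM) iteration. Then for every x ∈ H and every n ∈ ℕ: ‖x_{n+1} − x‖² ≤ β_n ‖x_n − x‖² + (1 − β_n)(2β_n ⟪x, x − x_n⟫ + (1 − β_n)‖x‖²) + ‖T(x) − x‖ (2‖β_n x_n − x‖ + ‖T(x) − x‖). -/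
/-!
Put `y = β xₙ`. Since `x_{n+1} - u = (1 - λ)(y - u) + λ(T y - u)` and nonexpansiveness gives
`‖T y - u‖ ≤ ‖y - u‖ + ‖T u - u‖`, we get `‖x_{n+1} - u‖ ≤ ‖y - u‖ + ‖T u - u‖`. Squaring, it
remains to bound `‖y - u‖²`; writing `y - u = β(xₙ - u) - (1 - β)u` and expanding gives the
middle term exactly, with `β²‖xₙ - u‖² ≤ β‖xₙ - u‖²`.
-/

lemma norm_add_smul_sub_sub_le {E : Type*} [SeminormedAddCommGroup E] [NormedSpace ℝ E]
    {T : E → E} (hT : ∀ a b : E, ‖T a - T b‖ ≤ ‖a - b‖) {t : ℝ} (ht₀ : 0 ≤ t) (ht₁ : t ≤ 1)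
    (y u : E) :
    ‖y + t • (T y - y) - u‖ ≤ ‖y - u‖ + t * ‖T u - u‖ := by
  have hTy : ‖T y - u‖ ≤ ‖y - u‖ + ‖T u - u‖ :=
    (norm_sub_le_norm_sub_add_norm_sub _ (T u) _).trans (add_le_add_left (hT y u) _)
  calc ‖y + t • (T y - y) - u‖ = ‖(1 - t) • (y - u) + t • (T y - u)‖ := by congr 1; module
    _ ≤ (1 - t) * ‖y - u‖ + t * ‖T y - u‖ := by
      refine (norm_add_le _ _).trans_eq ?_
      rw [norm_smul_of_nonneg (sub_nonneg.2 ht₁), norm_smul_of_nonneg ht₀]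
    _ ≤ (1 - t) * ‖y - u‖ + t * (‖y - u‖ + ‖T u - u‖) := by gcongr
    _ = ‖y - u‖ + t * ‖T u - u‖ := by ring

lemma norm_smul_sub_sq_eq {F : Type*} [SeminormedAddCommGroup F] [InnerProductSpace ℝ F]
    (b : ℝ) (v u : F) :
    ‖b • v - u‖ ^ 2 =
      b ^ 2 * ‖v - u‖ ^ 2 + (1 - b) * (2 * b * inner ℝ u (u - v) + (1 - b) * ‖u‖ ^ 2) := by
  have hdec : b • v - u = b • (v - u) - (1 - b) • u := by module
  rw [hdec, norm_sub_sq_real, norm_smul, norm_smul, real_inner_smul_left, real_inner_smul_right,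
    real_inner_comm, ← neg_sub u v, inner_neg_right, Real.norm_eq_abs, Real.norm_eq_abs,
    mul_pow, mul_pow, sq_abs, sq_abs]
  ring

theorem tkm_squared_distance_inequality_general
    {H : Type*} [NormedAddCommGroup H] [InnerProductSpace ℝ H]
    (T : H → H) (hT : ∀ a b : H, ‖T a - T b‖ ≤ ‖a - b‖)
    (β lam : ℕ → ℝ)
    (hβ : ∀ n, β n ∈ Set.Ioc (0 : ℝ) 1)
    (hlam : ∀ n, lam n ∈ Set.Ioc (0 : ℝ) 1)
    (x : ℕ → H)
    (hx : ∀ n, x (n + 1) = β n • x n + lam n • (T (β n • x n) - β n • x n)) :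
    ∀ (u : H) (n : ℕ),
      ‖x (n + 1) - u‖ ^ 2 ≤
        β n * ‖x n - u‖ ^ 2
          + (1 - β n) * (2 * β n * (inner ℝ u (u - x n) : ℝ) + (1 - β n) * ‖u‖ ^ 2)
          + ‖T u - u‖ * (2 * ‖β n • x n - u‖ + ‖T u - u‖) := by
  intro u n
  obtain ⟨hβ₀, hβ₁⟩ := hβ n
  obtain ⟨hlam₀, hlam₁⟩ := hlam n
  have hstep : ‖x (n + 1) - u‖ ≤ ‖β n • x n - u‖ + ‖T u - u‖ := by
    rw [hx n]
    exact (norm_add_smul_sub_sub_le hT hlam₀.le hlam₁ _ u).trans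
      (add_le_add_right (mul_le_of_le_one_left (norm_nonneg _) hlam₁) _)
  have hsq : ‖x (n + 1) - u‖ ^ 2 ≤
      ‖β n • x n - u‖ ^ 2 + ‖T u - u‖ * (2 * ‖β n • x n - u‖ + ‖T u - u‖) :=
    (pow_le_pow_left₀ (norm_nonneg _) hstep 2).trans_eq (by ring)
  have hβsq : β n ^ 2 * ‖x n - u‖ ^ 2 ≤ β n * ‖x n - u‖ ^ 2 := by
    gcongr
    exact sq_le hβ₀.le hβ₁
  rw [norm_smul_sub_sq_eq] at hsq
  linarith

/-- key inequality for the squared distances of the T-KM iterates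
to an arbitrary point. -/
theorem tkm_squared_distance_inequality
    {H : Type*} [NormedAddCommGroup H] [InnerProductSpace ℝ H] [CompleteSpace H]
    (T : H → H) (hT : ∀ a b : H, ‖T a - T b‖ ≤ ‖a - b‖)
    (β lam : ℕ → ℝ)
    (hβ : ∀ n, β n ∈ Set.Ioc (0 : ℝ) 1)
    (hlam : ∀ n, lam n ∈ Set.Ioc (0 : ℝ) 1)
    (x : ℕ → H)
    (hx : ∀ n, x (n + 1) = β n • x n + lam n • (T (β n • x n) - β n • x n)) :
    ∀ (u : H) (n : ℕ),
      ‖x (n + 1) - u‖ ^ 2 ≤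
        β n * ‖x n - u‖ ^ 2
          + (1 - β n) * (2 * β n * (inner ℝ u (u - x n) : ℝ) + (1 - β n) * ‖u‖ ^ 2)
          + ‖T u - u‖ * (2 * ‖β n • x n - u‖ + ‖T u - u‖) :=
  tkm_squared_distance_inequality_general T hT β lam hβ hlam x hx
end
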